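/- arXiv:2405.02553 — 15 statements merged into one kernel-verified Lean document; each statement's English description precedes it below -/
import Mathlib

section
/- For any set 𝓕 ⊆ {0,1}ⁿ, conv(Π(𝓕)) = H ∩ conv(K), where H = {(y₀,y) ∈ ℝ×ℝⁿ : u₀y₀ + Σ_{j∈N} u_j y_j = 1} and K = {(y₀,y) ∈ ℝ×ℝⁿ : y ∈ y₀·𝓕, y₀ > 0}. -/
noncomputable def ellMap (n : ℕ) (u0 : ℝ) (u : Fin n → ℝ) :
    (ℝ × (Fin n → ℝ)) →ₗ[ℝ] ℝ where
  toFun p := u0 * p.1 + ∑ j, u j * p.2 j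
  map_add' p q := by
    simp only [Prod.fst_add, Prod.snd_add, Pi.add_apply, mul_add,
      Finset.sum_add_distrib]
    ring
  map_smul' c p := by
    simp only [Prod.smul_fst, Prod.smul_snd, Pi.smul_apply, smul_eq_mul,
      RingHom.id_apply, mul_add, Finset.mul_sum]
    congr 1
    · ring
    · exact Finset.sum_congr rfl (fun j _ => by ring)

/-- For any set `𝓕 ⊆ {0,1}ⁿ`, `conv(Π(𝓕)) = H ∩ conv(K)`. -/
theorem stmt1 (n : ℕ) (hn : 1 ≤ n) (u0 : ℝ) (hu0 : 0 < u0)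
    (u : Fin n → ℝ) (hu : ∀ j, 0 ≤ u j)
    (F : Set (Fin n → ℝ)) (hF : ∀ x ∈ F, ∀ j, x j = 0 ∨ x j = 1) :
    convexHull ℝ {p : ℝ × (Fin n → ℝ) |
        u0 * p.1 + ∑ j, u j * p.2 j = 1 ∧ (∃ x ∈ F, p.2 = p.1 • x) ∧ 0 < p.1} =
      {p : ℝ × (Fin n → ℝ) | u0 * p.1 + ∑ j, u j * p.2 j = 1} ∩
        convexHull ℝ {p : ℝ × (Fin n → ℝ) | (∃ x ∈ F, p.2 = p.1 • x) ∧ 0 < p.1} := by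
  set L := ellMap n u0 u with hL
  have hLapp : ∀ p : ℝ × (Fin n → ℝ), L p = u0 * p.1 + ∑ j, u j * p.2 j :=
    fun p => rfl
  -- positivity of L on K
  have hpos : ∀ p : ℝ × (Fin n → ℝ), (∃ x ∈ F, p.2 = p.1 • x) → 0 < p.1 → 0 < L p := by
    rintro p ⟨x, hxF, hx⟩ hp1
    rw [hLapp, hx]
    have hs : 0 ≤ ∑ j, u j * (p.1 • x) j := by
      apply Finset.sum_nonneg
      intro j _
      have := hF x hxF j
      have hxj : 0 ≤ x j := by rcases this with h | h <;> simp [h]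
      simp only [Pi.smul_apply, smul_eq_mul]
      exact mul_nonneg (hu j) (mul_nonneg hp1.le hxj)
    nlinarith
  apply Set.Subset.antisymm
  · apply Set.subset_inter
    · apply convexHull_min
      · rintro p ⟨h1, _, _⟩; exact h1
      · have : {p : ℝ × (Fin n → ℝ) | u0 * p.1 + ∑ j, u j * p.2 j = 1} = {p | L p = 1} := by
          ext p; simp [hLapp]
        rw [this]
        exact convex_hyperplane L.isLinear 1
    · apply convexHull_mono
      rintro p ⟨_, h2, h3⟩; exact ⟨h2, h3⟩
  · rintro p ⟨hpH, hpK⟩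
    rw [convexHull_eq] at hpK ⊢
    obtain ⟨ι, t, w, z, hw0, hw1, hz, hcm⟩ := hpK
    have hcm' : ∑ i ∈ t, w i • z i = p := by
      rw [← hcm, Finset.centerMass_eq_of_sum_1 _ _ hw1]
    have hLz : ∀ i ∈ t, 0 < L (z i) := fun i hi => hpos _ (hz i hi).1 (hz i hi).2
    have hLp : L p = 1 := by rw [hLapp]; exact hpH
    have hsum : ∑ i ∈ t, w i * L (z i) = 1 := by
      rw [← hLp, ← hcm', map_sum]
      apply Finset.sum_congr rfl
      intro i hi
      rw [map_smul, smul_eq_mul]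
    refine ⟨ι, t, fun i => w i * L (z i), fun i => (L (z i))⁻¹ • z i, ?_, hsum, ?_, ?_⟩
    · intro i hi
      exact mul_nonneg (hw0 i hi) (hLz i hi).le
    · intro i hi
      obtain ⟨⟨x, hxF, hx⟩, hz1⟩ := hz i hi
      have hLzi := hLz i hi
      refine ⟨?_, ⟨x, hxF, ?_⟩, ?_⟩
      · rw [← hLapp, map_smul, smul_eq_mul, inv_mul_cancel₀ hLzi.ne']
      · show (L (z i))⁻¹ • (z i).2 = ((L (z i))⁻¹ • z i).1 • x
        rw [hx, Prod.smul_fst, smul_smul, smul_eq_mul]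
      · show 0 < (L (z i))⁻¹ * (z i).1
        positivity
    · rw [Finset.centerMass_eq_of_sum_1 _ _ hsum, ← hcm']
      apply Finset.sum_congr rfl
      intro i hi
      rw [smul_smul, mul_assoc, mul_inv_cancel₀ (hLz i hi).ne', mul_one]
end

section
/- Let 𝓕 ⊆ {0,1}ⁿ be nonempty and suppose A ∈ ℝ^{p×n}, B ∈ ℝ^{p×q} and b ∈ ℝ^p give an extended formulation of conv(𝓕), i.e. conv(𝓕) = {x ∈ ℝⁿ : ∃ z ∈ ℝ^q with A x + B z ≤ b}. Then conv(Π(𝓕)) = {(y₀,y) ∈ ℝ×ℝⁿ : ∃ z ∈ ℝ^q with A y + B z ≤ b·y₀, u₀y₀ + Σ_{j∈N} u_j y_j = 1, and y₀ ≥ 0}. -/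
/-!
Write `φ (t, y) = u₀ t + ∑ u_j y_j`. Every `(1, x)` with `x ∈ 𝓕` is the positive multiple
`φ (1, x)` of a point of `Π(𝓕)`, so a convex combination of such points, rescaled to `φ = 1`,
is again a convex combination of points of `Π(𝓕)` with reweighted coefficients. Hence `conv Π(𝓕)`
is the slice `φ = 1` of the open cone `{(t, t x) : t > 0, x ∈ conv 𝓕}`. Homogenizing the extended
formulation describes this cone for `t > 0`; at `t = 0` it gives the recession cone of the
bounded set `conv 𝓕`, which is `{0}` and is cut off by `φ = 1`.
-/

open Set Matrix Bornology

section PerspectiveCone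

variable {E : Type*} [AddCommGroup E] [Module ℝ E]

def perspectiveCone (S : Set E) : Set (ℝ × E) := {pt | (∃ x ∈ S, pt.2 = pt.1 • x) ∧ 0 < pt.1}

lemma perspectiveCone_mono {S T : Set E} (h : S ⊆ T) : perspectiveCone S ⊆ perspectiveCone T :=
  fun _ ⟨⟨x, hx, hpt⟩, ht⟩ => ⟨⟨x, h hx, hpt⟩, ht⟩

lemma convex_perspectiveCone {C : Set E} (hC : Convex ℝ C) : Convex ℝ (perspectiveCone C) := by
  rintro ⟨t₁, _⟩ ⟨⟨x₁, hx₁, rfl : _ = t₁ • x₁⟩, ht₁⟩ ⟨t₂, _⟩ ⟨⟨x₂, hx₂, rfl : _ = t₂ • x₂⟩, ht₂⟩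
    a c ha hc hac
  have hT : 0 < a * t₁ + c * t₂ := convex_Ioi (0 : ℝ) ht₁ ht₂ ha hc hac
  refine ⟨⟨_, convex_iff_div.1 hC hx₁ hx₂ (mul_nonneg ha ht₁.le) (mul_nonneg hc ht₂.le) hT, ?_⟩, hT⟩
  simp only [Prod.smul_mk, Prod.mk_add_mk, smul_eq_mul, smul_add, smul_smul,
    mul_div_cancel₀ _ hT.ne']

variable {V : Type*} [AddCommGroup V] [Module ℝ V]

theorem smul_mem_convexHull_of_forall_inv_smul_mem (φ : V →ₗ[ℝ] ℝ) {T P : Set V}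
    (hT : ∀ x ∈ T, 0 < φ x ∧ (φ x)⁻¹ • x ∈ P) {v : V} (hv : v ∈ convexHull ℝ T) {t : ℝ}
    (ht : 0 ≤ t) (hφ : φ (t • v) = 1) : t • v ∈ convexHull ℝ P := by
  obtain ⟨ι, _, w, x, hw₀, -, hx, rfl⟩ := mem_convexHull_iff_exists_fintype.1 hv
  -- by linearity the new weights sum to `φ (t • v) = 1`
  refine mem_convexHull_of_exists_fintype (fun i => t * w i * φ (x i))
    (fun i => (φ (x i))⁻¹ • x i) (fun i => ?_) ?_ (fun i => (hT _ (hx i)).2) ?_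
  · have := (hT _ (hx i)).1
    have := hw₀ i
    positivity
  · simpa [map_sum, Finset.mul_sum, mul_assoc] using hφ
  · simp [Finset.smul_sum, smul_smul, mul_assoc, mul_inv_cancel₀ (hT _ (hx _)).1.ne']

theorem convexHull_inter_perspectiveCone (φ : ℝ × E →ₗ[ℝ] ℝ) {S : Set E}
    (hS : ∀ x ∈ S, 0 < φ (1, x)) :
    convexHull ℝ ({pt | φ pt = 1} ∩ perspectiveCone S) =
      {pt | φ pt = 1} ∩ perspectiveCone (convexHull ℝ S) := by
  refine (convexHull_min ?_ ?_).antisymm ?_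
  · exact inter_subset_inter_right _ (perspectiveCone_mono (subset_convexHull ℝ S))
  · exact (convex_hyperplane φ.isLinear 1).inter (convex_perspectiveCone (convex_convexHull ℝ S))
  rintro ⟨t, _⟩ ⟨hφ, ⟨x, hx, rfl : _ = t • x⟩, ht⟩
  have h1x : ((1 : ℝ), x) ∈ convexHull ℝ ({1} ×ˢ S) := by
    rw [convexHull_prod, convexHull_singleton]
    exact ⟨rfl, hx⟩
  have hT : ∀ y ∈ ({1} ×ˢ S : Set (ℝ × E)),
      0 < φ y ∧ (φ y)⁻¹ • y ∈ {pt | φ pt = 1} ∩ perspectiveCone S := by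
    rintro ⟨_, s⟩ ⟨rfl, hs⟩
    have hd := hS s hs
    refine ⟨hd, ?_, ⟨s, hs, by simp⟩, by simpa using hd⟩
    simp only [mem_ofPred_eq, map_smul, smul_eq_mul, inv_mul_cancel₀ hd.ne']
  simpa using smul_mem_convexHull_of_forall_inv_smul_mem φ hT h1x ht.le (by simpa using hφ)

end PerspectiveCone

lemma eq_zero_of_forall_add_smul_mem {F : Type*} [NormedAddCommGroup F] [NormedSpace ℝ F]
    {C : Set F} (hC : IsBounded C) {x y : F} (h : ∀ s : ℝ, 0 < s → x + s • y ∈ C) : y = 0 := by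
  obtain ⟨R, hR⟩ := isBounded_iff_forall_norm_le.1 hC
  by_contra hy
  have hy' : 0 < ‖y‖ := norm_pos_iff.2 hy
  set s := (|R| + ‖x‖ + 1) / ‖y‖
  have hs : 0 < s := by positivity
  have hfar : ‖s • y‖ = |R| + ‖x‖ + 1 := by
    rw [norm_smul, Real.norm_of_nonneg hs.le, div_mul_cancel₀ _ hy'.ne']
  have htri := norm_sub_le (x + s • y) x
  rw [add_sub_cancel_left] at htri
  linarith [hR _ (h s hs), le_abs_self R]

section ExtendedFormulation

variable {m ι κ : Type*} [Fintype ι] [Fintype κ]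
  (A : Matrix m ι ℝ) (B : Matrix m κ ℝ) (b : m → ℝ)

def projPolyhedron : Set (ι → ℝ) := {x | ∃ z, A *ᵥ x + B *ᵥ z ≤ b}

def homogenization : ConvexCone ℝ (ℝ × (ι → ℝ)) where
  carrier := {pt | ∃ z, A *ᵥ pt.2 + B *ᵥ z ≤ pt.1 • b}
  smul_mem' c hc pt := fun ⟨z, hz⟩ => ⟨c • z, by
    simpa [mulVec_smul, smul_add, smul_smul] using smul_le_smul_of_nonneg_left hz hc.le⟩
  add_mem' pt₁ := fun ⟨z₁, hz₁⟩ pt₂ ⟨z₂, hz₂⟩ => ⟨z₁ + z₂, by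
    simpa [mulVec_add, add_smul, add_add_add_comm] using add_le_add hz₁ hz₂⟩

variable {A B b}

lemma mem_homogenization {pt : ℝ × (ι → ℝ)} :
    pt ∈ homogenization A B b ↔ ∃ z, A *ᵥ pt.2 + B *ᵥ z ≤ pt.1 • b :=
  Iff.rfl

lemma mk_one_mem_homogenization_iff {x : ι → ℝ} :
    ((1 : ℝ), x) ∈ homogenization A B b ↔ x ∈ projPolyhedron A B b := by
  rw [mem_homogenization, one_smul]
  rfl

lemma eq_zero_of_mk_zero_mem_homogenization (hne : (projPolyhedron A B b).Nonempty)
    (hbdd : IsBounded (projPolyhedron A B b)) {y : ι → ℝ}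
    (hy : ((0 : ℝ), y) ∈ homogenization A B b) : y = 0 := by
  obtain ⟨x, hx⟩ := hne
  refine eq_zero_of_forall_add_smul_mem hbdd (x := x) fun s hs => ?_
  rw [← mk_one_mem_homogenization_iff] at hx ⊢
  simpa using (homogenization A B b).add_mem hx ((homogenization A B b).smul_mem hs hy)

lemma inter_perspectiveCone_projPolyhedron (φ : ℝ × (ι → ℝ) →ₗ[ℝ] ℝ)
    (hne : (projPolyhedron A B b).Nonempty) (hbdd : IsBounded (projPolyhedron A B b)) :
    {pt | φ pt = 1} ∩ perspectiveCone (projPolyhedron A B b) =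
      {pt | φ pt = 1} ∩ (homogenization A B b ∩ {pt | 0 ≤ pt.1}) := by
  ext ⟨t, y⟩
  simp only [mem_inter_iff, mem_ofPred_eq, and_congr_right_iff]
  intro hφ
  constructor
  · rintro ⟨⟨x, hx, rfl : _ = t • x⟩, ht⟩
    refine ⟨?_, ht.le⟩
    simpa using (homogenization A B b).smul_mem ht (mk_one_mem_homogenization_iff.2 hx)
  · rintro ⟨hK, ht⟩
    obtain rfl | ht := ht.eq_or_lt
    · obtain rfl := eq_zero_of_mk_zero_mem_homogenization hne hbdd hK
      rw [Prod.mk_zero_zero, map_zero] at hφ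
      exact absurd hφ zero_ne_one
    · refine ⟨⟨t⁻¹ • y, ?_, by simp [smul_smul, ht.ne']⟩, ht⟩
      rw [← mk_one_mem_homogenization_iff]
      simpa [ht.ne'] using (homogenization A B b).smul_mem (inv_pos.2 ht) hK

end ExtendedFormulation

theorem stmt3_general (n p q : ℕ) (u0 : ℝ) (hu0 : 0 < u0)
    (u : Fin n → ℝ) (hu : ∀ j, 0 ≤ u j)
    (F : Set (Fin n → ℝ)) (hFne : F.Nonempty)
    (hF : ∀ x ∈ F, ∀ j, x j = 0 ∨ x j = 1)
    (A : Matrix (Fin p) (Fin n) ℝ) (B : Matrix (Fin p) (Fin q) ℝ) (b : Fin p → ℝ)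
    (hconv : convexHull ℝ F =
      {x : Fin n → ℝ | ∃ z : Fin q → ℝ, ∀ i, A.mulVec x i + B.mulVec z i ≤ b i}) :
    convexHull ℝ {pt : ℝ × (Fin n → ℝ) |
        u0 * pt.1 + ∑ j, u j * pt.2 j = 1 ∧ (∃ x ∈ F, pt.2 = pt.1 • x) ∧ 0 < pt.1} =
      {pt : ℝ × (Fin n → ℝ) |
        (∃ z : Fin q → ℝ, ∀ i, A.mulVec pt.2 i + B.mulVec z i ≤ b i * pt.1) ∧
        u0 * pt.1 + ∑ j, u j * pt.2 j = 1 ∧ 0 ≤ pt.1} := by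
  let φ : ℝ × (Fin n → ℝ) →ₗ[ℝ] ℝ := (LinearMap.lsmul ℝ ℝ u0).coprod (dotProductBilin ℝ ℝ u)
  have hP : convexHull ℝ F = projPolyhedron A B b := hconv
  have hF₀₁ : F ⊆ univ.pi fun _ => {0, 1} := fun x hx j _ => hF x hx j
  have hpos : ∀ x ∈ F, 0 < φ (1, x) := fun x hx => by
    have : 0 ≤ u ⬝ᵥ x := Finset.sum_nonneg fun j _ =>
      mul_nonneg (hu j) (by rcases hF x hx j with h | h <;> simp [h])
    simp only [φ, LinearMap.coprod_apply, LinearMap.lsmul_apply, dotProductBilin_apply_apply,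
      smul_eq_mul, mul_one]
    linarith
  have hbdd : IsBounded (convexHull ℝ F) :=
    isBounded_convexHull.2 ((Finite.pi fun _ => toFinite _).isBounded.subset hF₀₁)
  -- `φ pt` unfolds to `u0 * pt.1 + ∑ j, u j * pt.2 j`, so this is the left-hand side as stated
  calc convexHull ℝ ({pt | φ pt = 1} ∩ perspectiveCone F)
      = {pt | φ pt = 1} ∩ perspectiveCone (projPolyhedron A B b) := by
        rw [convexHull_inter_perspectiveCone φ hpos, hP]
    _ = {pt | φ pt = 1} ∩ (homogenization A B b ∩ {pt | 0 ≤ pt.1}) :=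
        inter_perspectiveCone_projPolyhedron φ (hP ▸ hFne.convexHull) (hP ▸ hbdd)
    _ = _ := by
        ext ⟨t, y⟩
        simp only [mem_inter_iff, mem_ofPred_eq, SetLike.mem_coe, mem_homogenization, Pi.le_def,
          Pi.add_apply, Pi.smul_apply, smul_eq_mul, mul_comm t]
        tauto

/-- Extended formulation for `conv(Π(𝓕))` obtained from an extended formulation of `conv(𝓕)`. -/
theorem stmt3 (n p q : ℕ) (hn : 1 ≤ n) (u0 : ℝ) (hu0 : 0 < u0)
    (u : Fin n → ℝ) (hu : ∀ j, 0 ≤ u j)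
    (F : Set (Fin n → ℝ)) (hFne : F.Nonempty)
    (hF : ∀ x ∈ F, ∀ j, x j = 0 ∨ x j = 1)
    (A : Matrix (Fin p) (Fin n) ℝ) (B : Matrix (Fin p) (Fin q) ℝ) (b : Fin p → ℝ)
    (hconv : convexHull ℝ F =
      {x : Fin n → ℝ | ∃ z : Fin q → ℝ, ∀ i, A.mulVec x i + B.mulVec z i ≤ b i}) :
    convexHull ℝ {pt : ℝ × (Fin n → ℝ) |
        u0 * pt.1 + ∑ j, u j * pt.2 j = 1 ∧ (∃ x ∈ F, pt.2 = pt.1 • x) ∧ 0 < pt.1} =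
      {pt : ℝ × (Fin n → ℝ) |
        (∃ z : Fin q → ℝ, ∀ i, A.mulVec pt.2 i + B.mulVec z i ≤ b i * pt.1) ∧
        u0 * pt.1 + ∑ j, u j * pt.2 j = 1 ∧ 0 ≤ pt.1} :=
  stmt3_general n p q u0 hu0 u hu F hFne hF A B b hconv
end

section
/- For any set 𝓕 ⊆ {0,1}ⁿ, the set of extreme points of conv(Π(𝓕)) equals H ∩ {(y₀,y) ∈ ℝ×ℝⁿ : y ∈ y₀·𝓕, y₀ > 0}, i.e. the extreme points of conv(Π(𝓕)) are exactly the points of Π(𝓕). -/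
/-!
A point `p = t • (1, x)` of `Π(𝓕)` is exposed by the linear functional
`ℓₓ (y₀, y) = ∑_{xⱼ = 0} yⱼ + ∑_{xⱼ = 1} (y₀ - yⱼ)`, whose value at `s • (1, z)` is `s` times
the Hamming distance between `z` and `x`. Hence `ℓₓ` vanishes at `p` and is positive at every
other point of `Π(𝓕)`: a point `s • (1, x)` with the same `x` is pinned to `p` by the hyperplane
`H`. A point of a set exposed in this strict sense is extreme in its convex hull, and extreme
points of a convex hull always lie in the generating set.
-/

open Set

section Exposed

variable {𝕜 E : Type*} [Field 𝕜] [LinearOrder 𝕜] [IsStrictOrderedRing 𝕜]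
  [AddCommGroup E] [Module 𝕜 E]

theorem eq_of_mem_convexHull_of_apply_eq_zero {s : Set E} {p y : E} {f : E →ₗ[𝕜] 𝕜}
    (hfp : f p = 0) (hf : ∀ q ∈ s, q ≠ p → 0 < f q) (hy : y ∈ convexHull 𝕜 s)
    (hfy : f y = 0) : y = p := by
  rcases (s \ {p}).eq_empty_or_nonempty with hs | hs
  · simpa using convexHull_mono (sdiff_eq_empty.1 hs) hy
  have hpos : convexHull 𝕜 (s \ {p}) ⊆ f ⁻¹' Ioi 0 :=
    convexHull_min (fun q hq ↦ hf q hq.1 hq.2) ((convex_Ioi 0).linear_preimage f)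
  replace hy := convexHull_mono (subset_insert_sdiff_singleton p s) hy
  rw [convexHull_insert hs, convexJoin_singleton_left, mem_iUnion₂] at hy
  obtain ⟨z, hz, a, b, -, hb, hab, rfl⟩ := hy
  have hb0 : b = 0 := by
    have : b * f z = 0 := by simpa [hfp] using hfy
    exact (mul_eq_zero.1 this).resolve_right (hpos hz).ne'
  rw [hb0, add_zero] at hab
  simp [hb0, hab]

theorem mem_extremePoints_convexHull_of_exposing {s : Set E} {p : E} (hp : p ∈ s)
    (f : E →ₗ[𝕜] 𝕜) (hfp : f p = 0) (hf : ∀ q ∈ s, q ≠ p → 0 < f q) :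
    p ∈ (convexHull 𝕜 s).extremePoints 𝕜 := by
  have hnonneg : convexHull 𝕜 s ⊆ f ⁻¹' Ici 0 := by
    refine convexHull_min (fun q hq ↦ ?_) ((convex_Ici 0).linear_preimage f)
    rcases eq_or_ne q p with rfl | hqp
    exacts [hfp.ge, (hf q hq hqp).le]
  refine mem_extremePoints.2 ⟨subset_convexHull 𝕜 s hp, fun x hx y hy hpxy ↦ ?_⟩
  obtain ⟨a, b, ha, hb, -, hpab⟩ := hpxy
  have hfx : 0 ≤ f x := hnonneg hx
  have hfy : 0 ≤ f y := hnonneg hy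
  have hsum : a * f x + b * f y = 0 := by simpa [hfp] using congr_arg f hpab
  exact ⟨eq_of_mem_convexHull_of_apply_eq_zero hfp hf hx (by nlinarith),
    eq_of_mem_convexHull_of_apply_eq_zero hfp hf hy (by nlinarith)⟩

end Exposed

section Hamming

variable {ι : Type*} [Fintype ι]

noncomputable def hammingFunctional (x : ι → ℝ) : ℝ × (ι → ℝ) →ₗ[ℝ] ℝ :=
  ∑ j, if x j = 0 then (LinearMap.proj j).comp (LinearMap.snd ℝ ℝ (ι → ℝ))
    else LinearMap.fst ℝ ℝ (ι → ℝ) - (LinearMap.proj j).comp (LinearMap.snd ℝ ℝ (ι → ℝ))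

theorem hammingFunctional_apply {x z : ι → ℝ} (hx : ∀ j, x j = 0 ∨ x j = 1)
    (hz : ∀ j, z j = 0 ∨ z j = 1) {q : ℝ × (ι → ℝ)} (hq : q.2 = q.1 • z) :
    hammingFunctional x q = q.1 * hammingDist z x := by
  classical
  obtain ⟨t, w⟩ := q
  dsimp only at hq ⊢
  subst hq
  simp only [hammingFunctional, hammingDist, LinearMap.sum_apply, Finset.card_filter,
    Nat.cast_sum, Finset.mul_sum]
  refine Finset.sum_congr rfl fun j _ ↦ ?_
  rcases hx j with hxj | hxj <;> rcases hz j with hzj | hzj <;> simp [hxj, hzj]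

end Hamming

section ChoiceProbability

variable {ι : Type*} [Fintype ι]

/-- The choice probability set `Π(𝓕)`. -/
def choiceProbabilitySet (u0 : ℝ) (u : ι → ℝ) (F : Set (ι → ℝ)) : Set (ℝ × (ι → ℝ)) :=
  {p | u0 * p.1 + ∑ j, u j * p.2 j = 1 ∧ (∃ x ∈ F, p.2 = p.1 • x) ∧ 0 < p.1}

variable {u0 : ℝ} {u : ι → ℝ} {F : Set (ι → ℝ)}

theorem eq_of_mem_choiceProbabilitySet_of_snd_eq_smul {p q : ℝ × (ι → ℝ)} {x : ι → ℝ}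
    (hp : p ∈ choiceProbabilitySet u0 u F) (hq : q ∈ choiceProbabilitySet u0 u F)
    (hpx : p.2 = p.1 • x) (hqx : q.2 = q.1 • x) : q = p := by
  have hscale : ∀ r ∈ choiceProbabilitySet u0 u F, r.2 = r.1 • x →
      r.1 * (u0 + ∑ j, u j * x j) = 1 := by
    rintro r ⟨hr, -, -⟩ hrx
    rw [← hr, hrx, mul_add, Finset.mul_sum]
    simp only [Pi.smul_apply, smul_eq_mul, mul_left_comm _ (u _), mul_comm u0]
  have hp1 := hscale p hp hpx
  have hfst : q.1 = p.1 :=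
    mul_right_cancel₀ (right_ne_zero_of_mul_eq_one hp1) ((hscale q hq hqx).trans hp1.symm)
  exact Prod.ext hfst (by rw [hqx, hpx, hfst])

theorem hammingFunctional_pos_of_mem_choiceProbabilitySet
    (hF : ∀ x ∈ F, ∀ j, x j = 0 ∨ x j = 1) {p q : ℝ × (ι → ℝ)} {x : ι → ℝ} (hxF : x ∈ F)
    (hp : p ∈ choiceProbabilitySet u0 u F) (hpx : p.2 = p.1 • x)
    (hq : q ∈ choiceProbabilitySet u0 u F) (hqp : q ≠ p) :
    0 < hammingFunctional x q := by
  obtain ⟨z, hzF, hqz⟩ := hq.2.1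
  rw [hammingFunctional_apply (hF x hxF) (hF z hzF) hqz]
  have hzx : z ≠ x := by
    rintro rfl
    exact hqp (eq_of_mem_choiceProbabilitySet_of_snd_eq_smul hp hq hpx hqz)
  exact mul_pos hq.2.2 (Nat.cast_pos.2 (hammingDist_pos.2 hzx))

end ChoiceProbability

theorem stmt4_general (n : ℕ) (u0 : ℝ) (u : Fin n → ℝ)
    (F : Set (Fin n → ℝ)) (hF : ∀ x ∈ F, ∀ j, x j = 0 ∨ x j = 1) :
    Set.extremePoints ℝ (convexHull ℝ {p : ℝ × (Fin n → ℝ) |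
        u0 * p.1 + ∑ j, u j * p.2 j = 1 ∧ (∃ x ∈ F, p.2 = p.1 • x) ∧ 0 < p.1}) =
      {p : ℝ × (Fin n → ℝ) | u0 * p.1 + ∑ j, u j * p.2 j = 1} ∩
        {p : ℝ × (Fin n → ℝ) | (∃ x ∈ F, p.2 = p.1 • x) ∧ 0 < p.1} := by
  rw [← ofPred_and]
  change (convexHull ℝ (choiceProbabilitySet u0 u F)).extremePoints ℝ =
    choiceProbabilitySet u0 u F
  refine Subset.antisymm extremePoints_convexHull_subset fun p hp ↦ ?_
  obtain ⟨x, hxF, hpx⟩ := hp.2.1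
  refine mem_extremePoints_convexHull_of_exposing hp (hammingFunctional x) ?_
    fun q hq hqp ↦ hammingFunctional_pos_of_mem_choiceProbabilitySet hF hxF hp hpx hq hqp
  rw [hammingFunctional_apply (hF x hxF) (hF x hxF) hpx, hammingDist_self, Nat.cast_zero, mul_zero]

/-- The extreme points of `conv(Π(𝓕))` are exactly the points of `Π(𝓕) = H ∩ K`. -/
theorem stmt4 (n : ℕ) (hn : 1 ≤ n) (u0 : ℝ) (hu0 : 0 < u0)
    (u : Fin n → ℝ) (hu : ∀ j, 0 ≤ u j)
    (F : Set (Fin n → ℝ)) (hF : ∀ x ∈ F, ∀ j, x j = 0 ∨ x j = 1) :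
    Set.extremePoints ℝ (convexHull ℝ {p : ℝ × (Fin n → ℝ) |
        u0 * p.1 + ∑ j, u j * p.2 j = 1 ∧ (∃ x ∈ F, p.2 = p.1 • x) ∧ 0 < p.1}) =
      {p : ℝ × (Fin n → ℝ) | u0 * p.1 + ∑ j, u j * p.2 j = 1} ∩
        {p : ℝ × (Fin n → ℝ) | (∃ x ∈ F, p.2 = p.1 • x) ∧ 0 < p.1} :=
  stmt4_general n u0 u F hF
end

section
/- The Charnes–Cooper map sending x ∈ {0,1}ⁿ to (y₀,y) with y₀ = 1/(u₀ + Σ_{j∈N} u_j x_j) and y_j = x_j/(u₀ + Σ_{j∈N} u_j x_j) for j ∈ N is well defined, and for every set 𝓕 ⊆ {0,1}ⁿ it restricts to a bijection from 𝓕 onto Π(𝓕). -/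
/-- The Charnes–Cooper map is well defined and restricts to a bijection from `𝓕` onto `Π(𝓕)`. -/
theorem stmt5 (n : ℕ) (hn : 1 ≤ n) (u0 : ℝ) (hu0 : 0 < u0)
    (u : Fin n → ℝ) (hu : ∀ j, 0 ≤ u j) :
    (∀ x : Fin n → ℝ, (∀ j, x j = 0 ∨ x j = 1) → 0 < u0 + ∑ j, u j * x j) ∧
    ∀ F : Set (Fin n → ℝ), (∀ x ∈ F, ∀ j, x j = 0 ∨ x j = 1) →
      Set.BijOn
        (fun x : Fin n → ℝ =>
          (((u0 + ∑ j, u j * x j)⁻¹ : ℝ),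
            fun j : Fin n => x j / (u0 + ∑ j', u j' * x j')))
        F
        {p : ℝ × (Fin n → ℝ) |
          u0 * p.1 + ∑ j, u j * p.2 j = 1 ∧ (∃ x ∈ F, p.2 = p.1 • x) ∧ 0 < p.1} := by
  have hpos : ∀ x : Fin n → ℝ, (∀ j, x j = 0 ∨ x j = 1) → 0 < u0 + ∑ j, u j * x j := by
    intro x hx
    have hsum : 0 ≤ ∑ j, u j * x j := by
      apply Finset.sum_nonneg
      intro j _
      rcases hx j with h | h <;> simp [h]
      exact hu j
    linarith
  refine ⟨hpos, fun F hF => ?_⟩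
  have hdpos : ∀ x ∈ F, 0 < u0 + ∑ j, u j * x j := fun x hx => hpos x (hF x hx)
  refine ⟨?_, ?_, ?_⟩
  · -- MapsTo
    intro x hx
    have hd := hdpos x hx
    refine ⟨?_, ⟨x, hx, ?_⟩, by positivity⟩
    · simp only
      have hs : ∑ j, u j * (x j / (u0 + ∑ j', u j' * x j')) =
          (∑ j, u j * x j) * (u0 + ∑ j', u j' * x j')⁻¹ := by
        rw [Finset.sum_mul]
        exact Finset.sum_congr rfl fun j _ => by ring
      rw [hs, ← add_mul]
      exact mul_inv_cancel₀ hd.ne'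
    · funext j
      simp [div_eq_inv_mul, smul_eq_mul]
  · -- InjOn
    intro x hx y hy hxy
    have hd1 := hdpos x hx
    have hd2 := hdpos y hy
    have h1 : (u0 + ∑ j, u j * x j)⁻¹ = (u0 + ∑ j, u j * y j)⁻¹ :=
      congrArg Prod.fst hxy
    have heq : (u0 + ∑ j, u j * x j) = (u0 + ∑ j, u j * y j) := by
      have := congrArg (·⁻¹) h1
      simpa using this
    have h2 : (fun j : Fin n => x j / (u0 + ∑ j', u j' * x j')) =
        (fun j : Fin n => y j / (u0 + ∑ j', u j' * y j')) := congrArg Prod.snd hxy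
    funext j
    have := congrFun h2 j
    simp only [heq] at this
    exact mul_left_cancel₀ (inv_ne_zero hd2.ne')
      (by simpa [div_eq_inv_mul] using this)
  · -- SurjOn
    rintro ⟨y0, y⟩ ⟨h1, ⟨x, hxF, hy⟩, h0⟩
    refine ⟨x, hxF, ?_⟩
    have hd := hdpos x hxF
    simp only at h1 hy ⊢
    subst hy
    have key : y0 * (u0 + ∑ j, u j * x j) = 1 := by
      have hs : ∑ j, u j * (y0 • x) j = y0 * ∑ j, u j * x j := by
        rw [Finset.mul_sum]
        exact Finset.sum_congr rfl fun j _ => by simp [smul_eq_mul]; ring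
      rw [hs] at h1
      rw [mul_add]
      linarith
    have hy0 : y0 = (u0 + ∑ j, u j * x j)⁻¹ := by
      field_simp at key ⊢
      linarith
    ext
    · simp [hy0]
    · simp [hy0, div_eq_inv_mul, smul_eq_mul]
end

section
/- Suppose there exists a feasible profile for (QAP), i.e. (x_i)_{i∈M⁺} with x_i ∈ 𝓕_i for all i ∈ M⁺ and x_0 ≥ x_i componentwise for all i ∈ M. Then the optimal value of (QAP) equals the optimal value of its partial convexification (QAP-Rlx): sup{ Σ_{i∈M⁺} α_i·R_i(x_i) : x_i ∈ 𝓕_i for all i ∈ M⁺, x_0 ≥ x_i for all i ∈ M } = sup{ Σ_{i∈M⁺} α_i·Σ_{j∈N} r_{ij}u_{ij}y_{ij} : (y_{i0}, y_i) ∈ conv(Π_i(𝓕_i)) for all i ∈ M; x_0 ∈ 𝓕_0, (y_{00}, y_0) ∈ Π_0(𝓕_0) with y_0 = y_{00}·x_0; and y_i ≤ y_{i0}·x_0 componentwise for all i ∈ M }. -/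
/-- The choice probability set `Π(𝓕)` under MNL with no-purchase weight `w0`
and preference weights `w`. -/
def choiceProbSet (n : ℕ) (w0 : ℝ) (w : Fin n → ℝ) (F : Set (Fin n → ℝ)) :
    Set (ℝ × (Fin n → ℝ)) :=
  {p | w0 * p.1 + ∑ j, w j * p.2 j = 1 ∧ (∃ x ∈ F, p.2 = p.1 • x) ∧ 0 < p.1}

lemma valAux (n : ℕ) (r w : Fin n → ℝ) (w0 : ℝ) (t : ℝ) (x : Fin n → ℝ)
    (heq : w0 * t + ∑ j, w j * (t * x j) = 1) :
    ∑ j, r j * w j * (t * x j) = (∑ j, r j * w j * x j) / (w0 + ∑ j, w j * x j) := by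
  have hd : t * (w0 + ∑ j, w j * x j) = 1 := by
    rw [mul_add, Finset.mul_sum, ← heq]
    congr 1
    · ring
    · exact Finset.sum_congr rfl fun j _ => by ring
  have ht : t = (w0 + ∑ j, w j * x j)⁻¹ := eq_inv_of_mul_eq_one_left (by linear_combination hd)
  calc ∑ j, r j * w j * (t * x j) = t * ∑ j, r j * w j * x j := by
        rw [Finset.mul_sum]; exact Finset.sum_congr rfl fun j _ => by ring
    _ = (∑ j, r j * w j * x j) / (w0 + ∑ j, w j * x j) := by
        rw [ht, div_eq_inv_mul]

lemma keyLemma (n : ℕ) (r w : Fin n → ℝ) (w0 : ℝ) (hw0 : 0 < w0) (hw : ∀ j, 0 ≤ w j)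
    (F : Set (Fin n → ℝ)) (hF : ∀ x ∈ F, ∀ j, x j = 0 ∨ x j = 1)
    (x0 : Fin n → ℝ) (hx0 : ∀ j, x0 j = 0 ∨ x0 j = 1)
    (p : ℝ × (Fin n → ℝ)) (hp : p ∈ convexHull ℝ (choiceProbSet n w0 w F))
    (hle : ∀ j, p.2 j ≤ p.1 * x0 j) :
    ∃ x ∈ F, (∀ j, x j ≤ x0 j) ∧
      ∑ j, r j * w j * p.2 j ≤ (∑ j, r j * w j * x j) / (w0 + ∑ j, w j * x j) := by
  rw [convexHull_eq] at hp
  obtain ⟨ι, s, lam, z, hlam0, hlam1, hzmem, hcm⟩ := hp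
  rw [Finset.centerMass_eq_of_sum_1 _ _ hlam1] at hcm
  -- extract per-point data
  have hxk : ∀ k ∈ s, ∃ xx, xx ∈ F ∧ (z k).2 = (z k).1 • xx := fun k hk => (hzmem k hk).2.1
  choose xx hxxF hxxz using hxk
  have hpos : ∀ k ∈ s, 0 < (z k).1 := fun k hk => (hzmem k hk).2.2
  have heqk : ∀ k ∈ s, w0 * (z k).1 + ∑ j, w j * (z k).2 j = 1 := fun k hk => (hzmem k hk).1
  -- component equations
  have hp2 : ∀ j, p.2 j = ∑ k ∈ s, lam k * (z k).2 j := by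
    intro j
    rw [← hcm]
    simp [Prod.snd_sum, Finset.sum_apply]
  -- value decomposition
  set c : ι → ℝ := fun k => ∑ j, r j * w j * (z k).2 j with hc
  have hS : ∑ j, r j * w j * p.2 j = ∑ k ∈ s, lam k * c k := by
    have h1 : ∀ j, r j * w j * p.2 j = ∑ k ∈ s, lam k * (r j * w j * (z k).2 j) := by
      intro j; rw [hp2 j, Finset.mul_sum]; exact Finset.sum_congr rfl fun k _ => by ring
    simp only [h1]
    rw [Finset.sum_comm]
    exact Finset.sum_congr rfl fun k _ => by rw [Finset.mul_sum]
  -- find good index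
  have hex : ∃ k ∈ s, 0 < lam k ∧ ∑ j, r j * w j * p.2 j ≤ c k := by
    by_contra hcon
    push_neg at hcon
    set S := ∑ j, r j * w j * p.2 j with hSdef
    have hk0 : ∃ k ∈ s, 0 < lam k := by
      by_contra h0
      push_neg at h0
      have : ∑ k ∈ s, lam k = 0 :=
        Finset.sum_eq_zero fun k hk => le_antisymm (h0 k hk) (hlam0 k hk)
      rw [hlam1] at this; norm_num at this
    obtain ⟨k0, hk0s, hk0pos⟩ := hk0
    have hlt : ∑ k ∈ s, lam k * c k < ∑ k ∈ s, lam k * S := by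
      apply Finset.sum_lt_sum
      · intro k hk
        rcases eq_or_lt_of_le (hlam0 k hk) with h | h
        · simp [← h]
        · exact mul_le_mul_of_nonneg_left (le_of_lt (hcon k hk h)) (le_of_lt h)
      · exact ⟨k0, hk0s, mul_lt_mul_of_pos_left (hcon k0 hk0s hk0pos) hk0pos⟩
    rw [← hS, ← Finset.sum_mul, hlam1, one_mul] at hlt
    exact lt_irrefl _ hlt
  obtain ⟨k, hks, hlamk, hSc⟩ := hex
  refine ⟨xx k hks, hxxF k hks, ?_, ?_⟩
  · -- xx k ≤ x0
    intro j
    rcases hx0 j with h0 | h1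
    · -- each term of p.2 j is nonneg, and p.2 j ≤ 0
      have hterm : ∀ k' ∈ s, 0 ≤ lam k' * (z k').2 j := by
        intro k' hk'
        apply mul_nonneg (hlam0 k' hk')
        rw [hxxz k' hk']
        have := hF _ (hxxF k' hk') j
        rcases this with h | h <;>
          simp [h, smul_eq_mul, le_of_lt (hpos k' hk')]
      have hsum0 : ∑ k' ∈ s, lam k' * (z k').2 j = 0 := by
        have h1 : ∑ k' ∈ s, lam k' * (z k').2 j ≤ 0 := by
          rw [← hp2 j]
          have := hle j
          rw [h0, mul_zero] at this
          exact this
        exact le_antisymm h1 (Finset.sum_nonneg hterm)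
      have := (Finset.sum_eq_zero_iff_of_nonneg hterm).1 hsum0 k hks
      have hz2 : (z k).2 j = 0 := by
        rcases mul_eq_zero.1 this with h | h
        · exact absurd h (ne_of_gt hlamk)
        · exact h
      rw [hxxz k hks] at hz2
      simp only [Pi.smul_apply, smul_eq_mul] at hz2
      rcases mul_eq_zero.1 hz2 with h | h
      · exact absurd h (ne_of_gt (hpos k hks))
      · rw [h, h0]
    · rw [h1]
      rcases hF _ (hxxF k hks) j with h | h <;> rw [h] <;> norm_num
  · -- value bound
    refine hSc.trans (le_of_eq ?_)
    have heq := heqk k hks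
    rw [hxxz k hks] at heq
    simp only [Pi.smul_apply, smul_eq_mul] at heq
    have hval := valAux n r w w0 (z k).1 (xx k hks) heq
    calc c k = ∑ j, r j * w j * ((z k).1 * xx k hks j) := by
          simp only [hc]
          exact Finset.sum_congr rfl fun j _ => by rw [hxxz k hks]; simp
      _ = _ := hval

lemma sumNonneg (n : ℕ) (w : Fin n → ℝ) (hw : ∀ j, 0 ≤ w j)
    (x : Fin n → ℝ) (hx : ∀ j, x j = 0 ∨ x j = 1) : 0 ≤ ∑ j, w j * x j :=
  Finset.sum_nonneg fun j _ => mul_nonneg (hw j) (by rcases hx j with h | h <;> simp [h])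

lemma denomPos (n : ℕ) (w0 : ℝ) (hw0 : 0 < w0) (w : Fin n → ℝ) (hw : ∀ j, 0 ≤ w j)
    (x : Fin n → ℝ) (hx : ∀ j, x j = 0 ∨ x j = 1) : 0 < w0 + ∑ j, w j * x j := by
  have := sumNonneg n w hw x hx; linarith

lemma memPi (n : ℕ) (w0 : ℝ) (hw0 : 0 < w0) (w : Fin n → ℝ) (hw : ∀ j, 0 ≤ w j)
    (F : Set (Fin n → ℝ)) (x : Fin n → ℝ) (hxF : x ∈ F) (hx : ∀ j, x j = 0 ∨ x j = 1) :
    ((w0 + ∑ j, w j * x j)⁻¹, (w0 + ∑ j, w j * x j)⁻¹ • x) ∈ choiceProbSet n w0 w F := by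
  have hd := denomPos n w0 hw0 w hw x hx
  refine ⟨?_, ⟨x, hxF, rfl⟩, inv_pos.2 hd⟩
  simp only [Pi.smul_apply, smul_eq_mul]
  calc w0 * (w0 + ∑ j, w j * x j)⁻¹ + ∑ j, w j * ((w0 + ∑ j, w j * x j)⁻¹ * x j)
      = (w0 + ∑ j, w j * x j)⁻¹ * (w0 + ∑ j, w j * x j) := by
        rw [mul_add, Finset.mul_sum]
        congr 1
        · ring
        · exact Finset.sum_congr rfl fun j _ => by ring
    _ = 1 := inv_mul_cancel₀ (ne_of_gt hd)

lemma ratioBound (n : ℕ) (r w : Fin n → ℝ) (w0 : ℝ) (hw0 : 0 < w0) (hw : ∀ j, 0 ≤ w j)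
    (x : Fin n → ℝ) (hx : ∀ j, x j = 0 ∨ x j = 1) :
    (∑ j, r j * w j * x j) / (w0 + ∑ j, w j * x j) ≤ (∑ j, |r j| * w j) / w0 := by
  have hD := sumNonneg n w hw x hx
  have hnum2 : 0 ≤ ∑ j, |r j| * w j :=
    Finset.sum_nonneg fun j _ => mul_nonneg (abs_nonneg _) (hw j)
  have hnumle : ∑ j, r j * w j * x j ≤ ∑ j, |r j| * w j := by
    refine Finset.sum_le_sum fun j _ => ?_
    rcases hx j with h | h
    · rw [h, mul_zero]; exact mul_nonneg (abs_nonneg _) (hw j)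
    · rw [h, mul_one]; exact mul_le_mul_of_nonneg_right (le_abs_self _) (hw j)
  exact div_le_div₀ hnum2 hnumle hw0 (by linarith)

/-- The optimal value of (QAP) equals the optimal value of its partial convexification
(QAP-Rlx).  Type `0` is the offline consumer type, types `i ≠ 0` are online. -/
theorem stmt6 (n m : ℕ) (hn : 1 ≤ n)
    (α : Fin (m + 1) → ℝ) (hα : ∀ i, 0 ≤ α i)
    (r : Fin (m + 1) → Fin n → ℝ)
    (w0 : Fin (m + 1) → ℝ) (hw0 : ∀ i, 0 < w0 i)
    (w : Fin (m + 1) → Fin n → ℝ) (hw : ∀ i j, 0 ≤ w i j)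
    (F : Fin (m + 1) → Set (Fin n → ℝ))
    (hF : ∀ i, ∀ x ∈ F i, ∀ j, x j = 0 ∨ x j = 1)
    (hfeas : ∃ x : Fin (m + 1) → Fin n → ℝ,
      (∀ i, x i ∈ F i) ∧ ∀ i, i ≠ 0 → ∀ j, x i j ≤ x 0 j) :
    sSup {v : ℝ | ∃ x : Fin (m + 1) → Fin n → ℝ,
        (∀ i, x i ∈ F i) ∧ (∀ i, i ≠ 0 → ∀ j, x i j ≤ x 0 j) ∧
        v = ∑ i, α i *
          ((∑ j, r i j * w i j * x i j) / (w0 i + ∑ j, w i j * x i j))} =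
    sSup {v : ℝ | ∃ (x0 : Fin n → ℝ) (y : Fin (m + 1) → ℝ × (Fin n → ℝ)),
        (∀ i, i ≠ 0 → y i ∈ convexHull ℝ (choiceProbSet n (w0 i) (w i) (F i))) ∧
        x0 ∈ F 0 ∧ y 0 ∈ choiceProbSet n (w0 0) (w 0) (F 0) ∧
        (y 0).2 = (y 0).1 • x0 ∧
        (∀ i, i ≠ 0 → ∀ j, (y i).2 j ≤ (y i).1 * x0 j) ∧
        v = ∑ i, α i * ∑ j, r i j * w i j * (y i).2 j} := by
  obtain ⟨xb, hxbF, hxble⟩ := hfeas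
  set A := {v : ℝ | ∃ x : Fin (m + 1) → Fin n → ℝ,
      (∀ i, x i ∈ F i) ∧ (∀ i, i ≠ 0 → ∀ j, x i j ≤ x 0 j) ∧
      v = ∑ i, α i *
        ((∑ j, r i j * w i j * x i j) / (w0 i + ∑ j, w i j * x i j))} with hA
  set B := {v : ℝ | ∃ (x0 : Fin n → ℝ) (y : Fin (m + 1) → ℝ × (Fin n → ℝ)),
      (∀ i, i ≠ 0 → y i ∈ convexHull ℝ (choiceProbSet n (w0 i) (w i) (F i))) ∧
      x0 ∈ F 0 ∧ y 0 ∈ choiceProbSet n (w0 0) (w 0) (F 0) ∧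
      (y 0).2 = (y 0).1 • x0 ∧
      (∀ i, i ≠ 0 → ∀ j, (y i).2 j ≤ (y i).1 * x0 j) ∧
      v = ∑ i, α i * ∑ j, r i j * w i j * (y i).2 j} with hB
  have hsub : A ⊆ B := by
    rintro v ⟨x, hxF, hxle, rfl⟩
    refine ⟨x 0, fun i => ((w0 i + ∑ j, w i j * x i j)⁻¹,
      (w0 i + ∑ j, w i j * x i j)⁻¹ • x i), ?_, hxF 0, ?_, rfl, ?_, ?_⟩
    · intro i _
      exact subset_convexHull ℝ _
        (memPi n (w0 i) (hw0 i) (w i) (hw i) (F i) (x i) (hxF i) (hF i _ (hxF i)))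
    · exact memPi n (w0 0) (hw0 0) (w 0) (hw 0) (F 0) (x 0) (hxF 0) (hF 0 _ (hxF 0))
    · intro i hi j
      simp only [Pi.smul_apply, smul_eq_mul]
      exact mul_le_mul_of_nonneg_left (hxle i hi j)
        (inv_nonneg.2 (le_of_lt (denomPos n (w0 i) (hw0 i) (w i) (hw i) (x i) (hF i _ (hxF i)))))
    · refine Finset.sum_congr rfl fun i _ => ?_
      congr 1
      have heq := (memPi n (w0 i) (hw0 i) (w i) (hw i) (F i) (x i) (hxF i) (hF i _ (hxF i))).1
      simp only [Pi.smul_apply, smul_eq_mul] at heq ⊢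
      exact (valAux n (r i) (w i) (w0 i) _ (x i) heq).symm
  have hAne : A.Nonempty := ⟨_, xb, hxbF, hxble, rfl⟩
  have hAbdd : BddAbove A := by
    refine ⟨∑ i, α i * ((∑ j, |r i j| * w i j) / w0 i), ?_⟩
    rintro v ⟨x, hxF, -, rfl⟩
    refine Finset.sum_le_sum fun i _ => ?_
    exact mul_le_mul_of_nonneg_left
      (ratioBound n (r i) (w i) (w0 i) (hw0 i) (hw i) (x i) (hF i _ (hxF i))) (hα i)
  have hBA : ∀ v ∈ B, v ≤ sSup A := by
    rintro v ⟨x0, y, hyc, hx0F, hy0, hy02, hyle, rfl⟩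
    have hx0b : ∀ j, x0 j = 0 ∨ x0 j = 1 := hF 0 x0 hx0F
    have hkey : ∀ i, i ≠ 0 → ∃ xx, xx ∈ F i ∧ (∀ j, xx j ≤ x0 j) ∧
        ∑ j, r i j * w i j * (y i).2 j ≤
          (∑ j, r i j * w i j * xx j) / (w0 i + ∑ j, w i j * xx j) := by
      intro i hi
      obtain ⟨xx, h1, h2, h3⟩ := keyLemma n (r i) (w i) (w0 i) (hw0 i) (hw i) (F i) (hF i)
        x0 hx0b (y i) (hyc i hi) (hyle i hi)
      exact ⟨xx, h1, h2, h3⟩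
    choose xx hxxF hxxle hxxval using hkey
    set x : Fin (m + 1) → Fin n → ℝ := fun i => if h : i = 0 then x0 else xx i h with hxdef
    have hx0eq : x 0 = x0 := by simp [hxdef]
    have hxieq : ∀ i (h : i ≠ 0), x i = xx i h := fun i h => by simp [hxdef, h]
    have hmem : (∑ i, α i * ((∑ j, r i j * w i j * x i j) / (w0 i + ∑ j, w i j * x i j))) ∈ A := by
      refine ⟨x, ?_, ?_, rfl⟩
      · intro i
        by_cases hi : i = 0
        · subst hi; rw [hx0eq]; exact hx0F
        · rw [hxieq i hi]; exact hxxF i hi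
      · intro i hi j
        rw [hx0eq, hxieq i hi]
        exact hxxle i hi j
    refine le_trans ?_ (le_csSup hAbdd hmem)
    refine Finset.sum_le_sum fun i _ => ?_
    by_cases hi : i = 0
    · subst hi
      rw [hx0eq]
      apply le_of_eq
      congr 1
      have heq := hy0.1
      rw [hy02] at heq
      simp only [Pi.smul_apply, smul_eq_mul] at heq
      have hval := valAux n (r 0) (w 0) (w0 0) (y 0).1 x0 heq
      rw [hy02]
      simp only [Pi.smul_apply, smul_eq_mul]
      exact hval
    · rw [hxieq i hi]
      exact mul_le_mul_of_nonneg_left (hxxval i hi) (hα i)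
  have hBne : B.Nonempty := hAne.mono hsub
  have hBbdd : BddAbove B := ⟨sSup A, fun v hv => hBA v hv⟩
  exact le_antisymm (csSup_le_csSup hBbdd hAne hsub) (csSup_le hBne hBA)
end

section
/- (Validity of the Under inequalities) For every j ∈ N, every S ⊆ N\{j}, and every (x_j, y₀, y) ∈ B_j, the inequality Under(j,S) holds: y_j ≥ α(S∪{j})·x_j − Σ_{t∈N\(S∪{j})} u_t·α(S∪{j})·y_t. -/
/-- Validity of the `Under(j,S)` inequalities on the single-product bilinear set `B_j`. -/
theorem stmt7 (n : ℕ) (hn : 1 ≤ n) (u0 : ℝ) (hu0 : 0 < u0)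
    (u : Fin n → ℝ) (hu : ∀ t, 0 ≤ u t)
    (j : Fin n) (S : Finset (Fin n)) (hS : j ∉ S)
    (xj y0 : ℝ) (y : Fin n → ℝ)
    (hx : xj = 0 ∨ xj = 1)
    (hnorm : u0 * y0 + ∑ t, u t * y t = 1)
    (hbd : ∀ t, 0 ≤ y t ∧ y t ≤ y0)
    (hbil : y j = y0 * xj) :
    (u0 + ∑ t ∈ insert j S, u t)⁻¹ * xj -
        ∑ t ∈ Finset.univ \ insert j S, u t * (u0 + ∑ s ∈ insert j S, u s)⁻¹ * y t
      ≤ y j := by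
  set T := insert j S with hT
  set U := u0 + ∑ t ∈ T, u t with hUdef
  have hUpos : 0 < U :=
    add_pos_of_pos_of_nonneg hu0 (Finset.sum_nonneg fun t _ => hu t)
  have hcomp : ∑ t ∈ Finset.univ \ T, u t * U⁻¹ * y t
      = U⁻¹ * ∑ t ∈ Finset.univ \ T, u t * y t := by
    rw [Finset.mul_sum]; apply Finset.sum_congr rfl; intro t _; ring
  rw [hcomp]
  have hcompnn : 0 ≤ ∑ t ∈ Finset.univ \ T, u t * y t :=
    Finset.sum_nonneg fun t _ => mul_nonneg (hu t) (hbd t).1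
  have hUinn : (0:ℝ) ≤ U⁻¹ := inv_nonneg.mpr hUpos.le
  rcases hx with h0 | h1
  · have hy : y j = 0 := by rw [hbil, h0, mul_zero]
    rw [hy, h0]
    have h2 : 0 ≤ U⁻¹ * ∑ t ∈ Finset.univ \ T, u t * y t :=
      mul_nonneg hUinn hcompnn
    linarith
  · have hyj : y j = y0 := by rw [hbil, h1, mul_one]
    have hsplit : ∑ t ∈ Finset.univ \ T, u t * y t + ∑ t ∈ T, u t * y t
        = ∑ t, u t * y t := Finset.sum_sdiff (Finset.subset_univ T)
    have hbound : ∑ t ∈ T, u t * y t ≤ (∑ t ∈ T, u t) * y0 := by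
      rw [Finset.sum_mul]
      exact Finset.sum_le_sum fun t _ => mul_le_mul_of_nonneg_left (hbd t).2 (hu t)
    have key : 1 - ∑ t ∈ Finset.univ \ T, u t * y t ≤ U * y0 := by
      have hU' : U * y0 = u0 * y0 + (∑ t ∈ T, u t) * y0 := by rw [hUdef]; ring
      linarith [hsplit, hbound, hnorm]
    rw [hyj, h1]
    have heq : U⁻¹ * 1 - U⁻¹ * ∑ t ∈ Finset.univ \ T, u t * y t
        = U⁻¹ * (1 - ∑ t ∈ Finset.univ \ T, u t * y t) := by ring
    rw [heq]
    calc U⁻¹ * (1 - ∑ t ∈ Finset.univ \ T, u t * y t)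
        ≤ U⁻¹ * (U * y0) := mul_le_mul_of_nonneg_left key hUinn
      _ = y0 := by field_simp
end

section
/- (Validity of the Over inequalities) For every j ∈ N, every S ⊆ N\{j}, and every (x_j, y₀, y) ∈ B_j, the inequality Over(j,S) holds: y_j ≤ α(S∪{j})·x_j + (1 − (u₀+u_j)·α(S∪{j}))·y₀ − Σ_{t∈S} u_t·α(S∪{j})·y_t. -/
/-- Validity of the `Over(j,S)` inequalities on the single-product bilinear set `B_j`. -/
theorem stmt8 (n : ℕ) (hn : 1 ≤ n) (u0 : ℝ) (hu0 : 0 < u0)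
    (u : Fin n → ℝ) (hu : ∀ t, 0 ≤ u t)
    (j : Fin n) (S : Finset (Fin n)) (hS : j ∉ S)
    (xj y0 : ℝ) (y : Fin n → ℝ)
    (hx : xj = 0 ∨ xj = 1)
    (hnorm : u0 * y0 + ∑ t, u t * y t = 1)
    (hbd : ∀ t, 0 ≤ y t ∧ y t ≤ y0)
    (hbil : y j = y0 * xj) :
    y j ≤ (u0 + ∑ t ∈ insert j S, u t)⁻¹ * xj +
        (1 - (u0 + u j) * (u0 + ∑ t ∈ insert j S, u t)⁻¹) * y0 -
        ∑ t ∈ S, u t * (u0 + ∑ s ∈ insert j S, u s)⁻¹ * y t := by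
  have hsum : ∑ t ∈ insert j S, u t = u j + ∑ t ∈ S, u t := Finset.sum_insert hS
  have hSnn : 0 ≤ ∑ t ∈ S, u t := Finset.sum_nonneg (fun t _ => hu t)
  have hU : 0 < u0 + ∑ t ∈ insert j S, u t := by
    rw [hsum]; have := hu j; linarith
  set α := (u0 + ∑ t ∈ insert j S, u t)⁻¹ with hα
  have hαpos : 0 < α := inv_pos.mpr hU
  have hαU : α * (u0 + u j + ∑ t ∈ S, u t) = 1 := by
    have h : u0 + ∑ t ∈ insert j S, u t = u0 + u j + ∑ t ∈ S, u t := by rw [hsum]; ring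
    rw [hα, h, inv_mul_cancel₀ (by rw [← h]; exact hU.ne')]
  have hsumS : ∑ t ∈ S, u t * α * y t = α * ∑ t ∈ S, u t * y t := by
    rw [Finset.mul_sum]; apply Finset.sum_congr rfl; intro t _; ring
  rcases hx with h0 | h1
  · subst h0
    rw [hbil]
    have hbound : ∑ t ∈ S, u t * y t ≤ (∑ t ∈ S, u t) * y0 := by
      rw [Finset.sum_mul]
      apply Finset.sum_le_sum
      intro t _
      exact mul_le_mul_of_nonneg_left (hbd t).2 (hu t)
    have hy0 : 0 ≤ y0 := le_trans (hbd j).1 (hbd j).2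
    rw [hsumS]
    nlinarith [mul_le_mul_of_nonneg_left hbound hαpos.le]
  · subst h1
    rw [hbil]
    have hyj : y j = y0 := by rw [hbil]; ring
    have h1 : (u0 + u j) * y0 + ∑ t ∈ S, u t * y t ≤ 1 := by
      have hsub : ∑ t ∈ insert j S, u t * y t ≤ ∑ t, u t * y t := by
        apply Finset.sum_le_sum_of_subset_of_nonneg (Finset.subset_univ _)
        intro t _ _
        exact mul_nonneg (hu t) (hbd t).1
      rw [Finset.sum_insert hS, hyj] at hsub
      linarith [hnorm]
    rw [hsumS]
    nlinarith [mul_le_mul_of_nonneg_left h1 hαpos.le]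
end

section
/- Fix j ∈ N. Every (x_j, y₀, y) ∈ B_j satisfies the four inequalities: y_j ≥ α(N)·x_j; y_j ≥ α(∅)·x_j + y₀ − α(∅); y_j ≤ α({j})·x_j; and y_j ≤ α(N\{j})·x_j + y₀ − α(N\{j}). Moreover, every point (x_j, y₀, y) with x_j ∈ [0,1] and (y₀,y) ∈ Y that satisfies these four inequalities also satisfies the McCormick inequalities with bounds y₀ᴸ = α(N) and y₀ᵁ = α(∅): y_j ≤ α(∅)·x_j; y_j ≤ α(N)·x_j + y₀ − α(N); y_j ≥ α(N)·x_j; and y_j ≥ α(∅)·x_j + y₀ − α(∅). -/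
/-- The four specialized Under/Over inequalities (McCormickPlus) are valid on `B_j`,
and they imply the McCormick inequalities with bounds `y₀ᴸ = α(N)` and `y₀ᵁ = α(∅)`. -/
theorem stmt9 (n : ℕ) (hn : 1 ≤ n) (u0 : ℝ) (hu0 : 0 < u0)
    (u : Fin n → ℝ) (hu : ∀ t, 0 ≤ u t) (j : Fin n) :
    (∀ (xj y0 : ℝ) (y : Fin n → ℝ),
      (xj = 0 ∨ xj = 1) →
      u0 * y0 + ∑ t, u t * y t = 1 →
      (∀ t, 0 ≤ y t ∧ y t ≤ y0) →
      y j = y0 * xj →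
        (u0 + ∑ t, u t)⁻¹ * xj ≤ y j ∧
        u0⁻¹ * xj + y0 - u0⁻¹ ≤ y j ∧
        y j ≤ (u0 + u j)⁻¹ * xj ∧
        y j ≤ (u0 + ∑ t ∈ Finset.univ \ {j}, u t)⁻¹ * xj + y0 -
          (u0 + ∑ t ∈ Finset.univ \ {j}, u t)⁻¹) ∧
    (∀ (xj y0 : ℝ) (y : Fin n → ℝ),
      0 ≤ xj → xj ≤ 1 →
      u0 * y0 + ∑ t, u t * y t = 1 →
      (∀ t, 0 ≤ y t ∧ y t ≤ y0) →
      ((u0 + ∑ t, u t)⁻¹ * xj ≤ y j ∧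
        u0⁻¹ * xj + y0 - u0⁻¹ ≤ y j ∧
        y j ≤ (u0 + u j)⁻¹ * xj ∧
        y j ≤ (u0 + ∑ t ∈ Finset.univ \ {j}, u t)⁻¹ * xj + y0 -
          (u0 + ∑ t ∈ Finset.univ \ {j}, u t)⁻¹) →
        (y j ≤ u0⁻¹ * xj ∧
         y j ≤ (u0 + ∑ t, u t)⁻¹ * xj + y0 - (u0 + ∑ t, u t)⁻¹ ∧
         (u0 + ∑ t, u t)⁻¹ * xj ≤ y j ∧
         u0⁻¹ * xj + y0 - u0⁻¹ ≤ y j)) := by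
  have hS : (0:ℝ) ≤ ∑ t, u t := Finset.sum_nonneg fun t _ => hu t
  have hS' : (0:ℝ) ≤ ∑ t ∈ Finset.univ \ {j}, u t :=
    Finset.sum_nonneg fun t _ => hu t
  have hUN : (0:ℝ) < u0 + ∑ t, u t := by linarith
  have hUj : (0:ℝ) < u0 + u j := by have := hu j; linarith
  have hUNj : (0:ℝ) < u0 + ∑ t ∈ Finset.univ \ {j}, u t := by linarith
  have hsplit : ∀ y : Fin n → ℝ,
      (∑ t, u t * y t) = u j * y j + ∑ t ∈ Finset.univ \ {j}, u t * y t := by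
    intro y
    exact Finset.sum_eq_add_sum_sdiff_singleton_of_mem (Finset.mem_univ j) (fun t => u t * y t)
  have hSN : (∑ t ∈ Finset.univ \ {j}, u t) ≤ ∑ t, u t := by
    have := hsplit (fun _ => 1)
    simp at this
    have := hu j
    linarith [Finset.sum_eq_add_sum_sdiff_singleton_of_mem (Finset.mem_univ j) u, hu j]
  constructor
  · rintro xj y0 y hx hfeas hbnd hbil
    have hy0nn : 0 ≤ y0 := le_trans (hbnd j).1 (hbnd j).2
    have hsum_nn : 0 ≤ ∑ t, u t * y t :=
      Finset.sum_nonneg fun t _ => mul_nonneg (hu t) (hbnd t).1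
    have hsum_nn' : 0 ≤ ∑ t ∈ Finset.univ \ {j}, u t * y t :=
      Finset.sum_nonneg fun t _ => mul_nonneg (hu t) (hbnd t).1
    have hy0ub : y0 ≤ u0⁻¹ := by
      rw [← one_div]; exact (le_div_iff₀ hu0).mpr (by nlinarith)
    have hsum' : (∑ t ∈ Finset.univ \ {j}, u t * y t) ≤
        (∑ t ∈ Finset.univ \ {j}, u t) * y0 := by
      rw [Finset.sum_mul]
      exact Finset.sum_le_sum fun t _ =>
        mul_le_mul_of_nonneg_left (hbnd t).2 (hu t)
    have hsumfull : (∑ t, u t * y t) ≤ (∑ t, u t) * y0 := by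
      rw [Finset.sum_mul]
      exact Finset.sum_le_sum fun t _ =>
        mul_le_mul_of_nonneg_left (hbnd t).2 (hu t)
    have hsp := hsplit y
    rcases hx with h0 | h1
    · subst h0
      have hyj : y j = 0 := by rw [hbil]; ring
      have hy0lb : (u0 + ∑ t ∈ Finset.univ \ {j}, u t)⁻¹ ≤ y0 := by
        rw [← one_div]; exact (div_le_iff₀ hUNj).mpr (by nlinarith)
      refine ⟨by simp [hyj], by simpa [hyj] using hy0ub, by simp [hyj], ?_⟩
      rw [hyj]; nlinarith
    · subst h1
      have hyj : y j = y0 := by rw [hbil]; ring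
      have hy0ubj : y0 ≤ (u0 + u j)⁻¹ := by
        rw [← one_div]; exact (le_div_iff₀ hUj).mpr (by nlinarith)
      have hy0lbN : (u0 + ∑ t, u t)⁻¹ ≤ y0 := by
        rw [← one_div]; exact (div_le_iff₀ hUN).mpr (by nlinarith)
      exact ⟨by simpa [hyj] using hy0lbN, by rw [hyj]; ring_nf; linarith,
        by simpa [hyj] using hy0ubj, by rw [hyj]; ring_nf; linarith⟩
  · rintro xj y0 y hx0 hx1 hfeas hbnd ⟨h1, h2, h3, h4⟩
    have hαj : (u0 + u j)⁻¹ ≤ u0⁻¹ :=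
      inv_anti₀ hu0 (by have := hu j; linarith)
    have hβ : (u0 + ∑ t, u t)⁻¹ ≤ (u0 + ∑ t ∈ Finset.univ \ {j}, u t)⁻¹ :=
      inv_anti₀ hUNj (by linarith)
    refine ⟨le_trans h3 (mul_le_mul_of_nonneg_right hαj hx0), ?_, h1, h2⟩
    nlinarith [mul_le_mul_of_nonneg_right hβ (by linarith : (0:ℝ) ≤ 1 - xj)]
end

section
/- Fix j ∈ N, x̄_j ∈ [0,1] and (ȳ₀, ȳ) ∈ Y, and let S* := {t ∈ N\{j} : ȳ_t ≥ ȳ_j}. Then (x̄_j, ȳ₀, ȳ) satisfies Under(j,S) for every S ⊆ N\{j} if and only if it satisfies Under(j,S*). Equivalently, S* minimizes the function S ↦ U(S∪{j})·ȳ_j + Σ_{t∈N\(S∪{j})} u_t·ȳ_t over all subsets S ⊆ N\{j}. -/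
/-!
Both parts reduce to one computation. Multiplying `Under(j,S)` by `U(S∪{j}) > 0` turns it into
`x̄_j ≤ u₀ ȳ_j + Σ_t u_t c_t`, where `c_t = ȳ_j` for `t ∈ S∪{j}` and `c_t = ȳ_t` otherwise. Since
`u_t ≥ 0`, each term is at least `u_t · min(ȳ_j, ȳ_t)`, and `S*∪{j} = {t : ȳ_j ≤ ȳ_t}` attains
this bound term by term; so `S*` minimizes the right-hand side and its inequality implies all others.
-/

open Finset

section Objective

variable {ι R : Type*} [Fintype ι] [DecidableEq ι]

theorem add_sum_mul_add_sum_sdiff_eq_sum_ite [CommSemiring R] (c a : R) (u y : ι → R)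
    (A : Finset ι) :
    (c + ∑ t ∈ A, u t) * a + ∑ t ∈ univ \ A, u t * y t
      = c * a + ∑ t, u t * if t ∈ A then a else y t := by
  simp only [mul_ite, sum_ite, filter_mem_eq_inter, univ_inter, ← compl_eq_univ_sdiff,
    filter_not, add_mul, sum_mul, add_assoc]

theorem sum_mul_min_le_sum_mul_ite [Semiring R] [LinearOrder R] [IsOrderedRing R] {u : ι → R}
    (hu : ∀ t, 0 ≤ u t) (a : R) (y : ι → R) (A : Finset ι) :
    ∑ t, u t * min a (y t) ≤ ∑ t, u t * if t ∈ A then a else y t := by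
  gcongr with t
  · exact hu t
  · split_ifs
    · exact min_le_left _ _
    · exact min_le_right _ _

theorem sum_mul_ite_mem_filter_le_eq_sum_mul_min [AddCommMonoid R] [Mul R] [LinearOrder R]
    (u : ι → R) (a : R) (y : ι → R) :
    ∑ t, u t * (if t ∈ univ.filter (a ≤ y ·) then a else y t) = ∑ t, u t * min a (y t) := by
  refine sum_congr rfl fun t _ => ?_
  simp only [mem_filter_univ]
  split_ifs with h
  · rw [min_eq_left h]
  · rw [min_eq_right (le_of_not_ge h)]

theorem add_sum_mul_add_sum_sdiff_filter_le [CommSemiring R] [LinearOrder R] [IsOrderedRing R]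
    {u : ι → R} (hu : ∀ t, 0 ≤ u t) (c a : R) (y : ι → R) (A : Finset ι) :
    (c + ∑ t ∈ univ.filter (a ≤ y ·), u t) * a + ∑ t ∈ univ \ univ.filter (a ≤ y ·), u t * y t
      ≤ (c + ∑ t ∈ A, u t) * a + ∑ t ∈ univ \ A, u t * y t := by
  rw [add_sum_mul_add_sum_sdiff_eq_sum_ite, add_sum_mul_add_sum_sdiff_eq_sum_ite,
    sum_mul_ite_mem_filter_le_eq_sum_mul_min]
  exact add_le_add le_rfl (sum_mul_min_le_sum_mul_ite hu a y A)

end Objective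

theorem inv_mul_sub_sum_mul_inv_mul_le_iff {ι 𝕜 : Type*} [Field 𝕜] [LinearOrder 𝕜]
    [IsStrictOrderedRing 𝕜] {U : 𝕜} (hU : 0 < U) (x b : 𝕜) (u y : ι → 𝕜)
    (B : Finset ι) :
    U⁻¹ * x - ∑ t ∈ B, u t * U⁻¹ * y t ≤ b ↔ x ≤ U * b + ∑ t ∈ B, u t * y t := by
  have hsum : ∑ t ∈ B, u t * U⁻¹ * y t = U⁻¹ * ∑ t ∈ B, u t * y t := by
    rw [mul_sum]
    exact sum_congr rfl fun t _ => by ring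
  rw [hsum, ← mul_sub, inv_mul_le_iff₀ hU, sub_le_iff_le_add]

theorem insert_filter_ne_and_le_eq_filter_le {ι α : Type*} [Fintype ι] [DecidableEq ι]
    [LinearOrder α] (y : ι → α) (j : ι) :
    insert j (univ.filter fun t => t ≠ j ∧ y j ≤ y t) = univ.filter (y j ≤ y ·) := by
  ext t
  by_cases h : t = j <;> simp [h]

theorem stmt10_general (n : ℕ) (u0 : ℝ) (hu0 : 0 < u0)
    (u : Fin n → ℝ) (hu : ∀ t, 0 ≤ u t) (j : Fin n)
    (xj : ℝ) (y : Fin n → ℝ)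
    (Under : Finset (Fin n) → Prop)
    (hUnder : ∀ S : Finset (Fin n),
      Under S ↔
        (u0 + ∑ t ∈ insert j S, u t)⁻¹ * xj -
            ∑ t ∈ Finset.univ \ insert j S, u t * (u0 + ∑ s ∈ insert j S, u s)⁻¹ * y t
          ≤ y j) :
    ((∀ S : Finset (Fin n), j ∉ S → Under S) ↔
        Under (Finset.univ.filter fun t => t ≠ j ∧ y j ≤ y t)) ∧
    (∀ S : Finset (Fin n), j ∉ S →
      (u0 + ∑ t ∈ insert j (Finset.univ.filter fun t => t ≠ j ∧ y j ≤ y t), u t) * y j +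
          ∑ t ∈ Finset.univ \ insert j (Finset.univ.filter fun t => t ≠ j ∧ y j ≤ y t),
            u t * y t
        ≤ (u0 + ∑ t ∈ insert j S, u t) * y j +
            ∑ t ∈ Finset.univ \ insert j S, u t * y t) := by
  set Sstar := univ.filter fun t => t ≠ j ∧ y j ≤ y t
  set F : Finset (Fin n) → ℝ := fun S =>
    (u0 + ∑ t ∈ insert j S, u t) * y j + ∑ t ∈ univ \ insert j S, u t * y t
  have hmin (S : Finset (Fin n)) : F Sstar ≤ F S := by
    simp only [F, Sstar, insert_filter_ne_and_le_eq_filter_le]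
    exact add_sum_mul_add_sum_sdiff_filter_le hu u0 (y j) y (insert j S)
  have hiff (S : Finset (Fin n)) : Under S ↔ xj ≤ F S :=
    (hUnder S).trans <| inv_mul_sub_sum_mul_inv_mul_le_iff
      (add_pos_of_pos_of_nonneg hu0 (sum_nonneg fun t _ => hu t)) _ _ _ _ _
  have hj : j ∉ Sstar := by simp [Sstar]
  refine ⟨⟨fun h => h Sstar hj, fun h S _ => ?_⟩, fun S _ => hmin S⟩
  exact (hiff S).2 (((hiff Sstar).1 h).trans (hmin S))

/-- Separation for the `Under` inequalities: the choice-probability-ordered set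
`S* = {t ≠ j : ȳ_t ≥ ȳ_j}` gives the most violated inequality, and it minimizes
`S ↦ U(S∪{j})·ȳ_j + Σ_{t∉S∪{j}} u_t·ȳ_t`. -/
theorem stmt10 (n : ℕ) (hn : 1 ≤ n) (u0 : ℝ) (hu0 : 0 < u0)
    (u : Fin n → ℝ) (hu : ∀ t, 0 ≤ u t) (j : Fin n)
    (xj y0 : ℝ) (y : Fin n → ℝ)
    (hx0 : 0 ≤ xj) (hx1 : xj ≤ 1)
    (hnorm : u0 * y0 + ∑ t, u t * y t = 1)
    (hbd : ∀ t, 0 ≤ y t ∧ y t ≤ y0)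
    (Under : Finset (Fin n) → Prop)
    (hUnder : ∀ S : Finset (Fin n),
      Under S ↔
        (u0 + ∑ t ∈ insert j S, u t)⁻¹ * xj -
            ∑ t ∈ Finset.univ \ insert j S, u t * (u0 + ∑ s ∈ insert j S, u s)⁻¹ * y t
          ≤ y j) :
    ((∀ S : Finset (Fin n), j ∉ S → Under S) ↔
        Under (Finset.univ.filter fun t => t ≠ j ∧ y j ≤ y t)) ∧
    (∀ S : Finset (Fin n), j ∉ S →
      (u0 + ∑ t ∈ insert j (Finset.univ.filter fun t => t ≠ j ∧ y j ≤ y t), u t) * y j +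
          ∑ t ∈ Finset.univ \ insert j (Finset.univ.filter fun t => t ≠ j ∧ y j ≤ y t),
            u t * y t
        ≤ (u0 + ∑ t ∈ insert j S, u t) * y j +
            ∑ t ∈ Finset.univ \ insert j S, u t * y t) :=
  stmt10_general n u0 hu0 u hu j xj y Under hUnder
end

section
/- Fix j ∈ N, x̄_j ∈ [0,1] and (ȳ₀, ȳ) ∈ Y, and let T* := {t ∈ N\{j} : ȳ_t ≥ ȳ₀ − ȳ_j}. Then (x̄_j, ȳ₀, ȳ) satisfies Over(j,S) for every S ⊆ N\{j} if and only if it satisfies Over(j,T*). Equivalently, T* maximizes the function S ↦ U(S∪{j})·ȳ_j − Σ_{t∈S} u_t·(ȳ₀ − ȳ_t) over all subsets S ⊆ N\{j}. -/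
/-- Separation for the `Over` inequalities: the choice-probability-ordered set
`T* = {t ≠ j : ȳ_t ≥ ȳ₀ − ȳ_j}` gives the most violated inequality, and it maximizes
`S ↦ U(S∪{j})·ȳ_j − Σ_{t∈S} u_t·(ȳ₀ − ȳ_t)`. -/
theorem stmt11 (n : ℕ) (hn : 1 ≤ n) (u0 : ℝ) (hu0 : 0 < u0)
    (u : Fin n → ℝ) (hu : ∀ t, 0 ≤ u t) (j : Fin n)
    (xj y0 : ℝ) (y : Fin n → ℝ)
    (hx0 : 0 ≤ xj) (hx1 : xj ≤ 1)
    (hnorm : u0 * y0 + ∑ t, u t * y t = 1)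
    (hbd : ∀ t, 0 ≤ y t ∧ y t ≤ y0)
    (Over : Finset (Fin n) → Prop)
    (hOver : ∀ S : Finset (Fin n),
      Over S ↔
        y j ≤ (u0 + ∑ t ∈ insert j S, u t)⁻¹ * xj +
            (1 - (u0 + u j) * (u0 + ∑ t ∈ insert j S, u t)⁻¹) * y0 -
            ∑ t ∈ S, u t * (u0 + ∑ s ∈ insert j S, u s)⁻¹ * y t) :
    ((∀ S : Finset (Fin n), j ∉ S → Over S) ↔
        Over (Finset.univ.filter fun t => t ≠ j ∧ y0 - y j ≤ y t)) ∧
    (∀ S : Finset (Fin n), j ∉ S →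
      (u0 + ∑ t ∈ insert j S, u t) * y j - ∑ t ∈ S, u t * (y0 - y t)
        ≤ (u0 + ∑ t ∈ insert j (Finset.univ.filter fun t => t ≠ j ∧ y0 - y j ≤ y t), u t) * y j -
            ∑ t ∈ (Finset.univ.filter fun t => t ≠ j ∧ y0 - y j ≤ y t), u t * (y0 - y t)) := by
  set T : Finset (Fin n) := Finset.univ.filter fun t => t ≠ j ∧ y0 - y j ≤ y t with hT
  have hjT : j ∉ T := by simp [hT]
  -- rewrite f S in "gain" form
  have hf : ∀ S : Finset (Fin n), j ∉ S →
      (u0 + ∑ t ∈ insert j S, u t) * y j - ∑ t ∈ S, u t * (y0 - y t)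
        = (u0 + u j) * y j + ∑ t ∈ S, u t * (y j + y t - y0) := by
    intro S hS
    have e1 : ∑ t ∈ S, u t * (y j + y t - y0)
        = (∑ t ∈ S, u t) * y j - ∑ t ∈ S, u t * (y0 - y t) := by
      rw [Finset.sum_mul, ← Finset.sum_sub_distrib]
      exact Finset.sum_congr rfl fun t _ => by ring
    rw [Finset.sum_insert hS, e1]; ring
  -- maximality of T
  have hmax : ∀ S : Finset (Fin n), j ∉ S →
      (u0 + ∑ t ∈ insert j S, u t) * y j - ∑ t ∈ S, u t * (y0 - y t)
        ≤ (u0 + ∑ t ∈ insert j T, u t) * y j - ∑ t ∈ T, u t * (y0 - y t) := by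
    intro S hS
    rw [hf S hS, hf T hjT]
    have hsplit : ∑ t ∈ S ∩ T, u t * (y j + y t - y0) + ∑ t ∈ S \ T, u t * (y j + y t - y0)
        = ∑ t ∈ S, u t * (y j + y t - y0) := Finset.sum_inter_add_sum_sdiff S T _
    have hneg : ∑ t ∈ S \ T, u t * (y j + y t - y0) ≤ 0 := by
      apply Finset.sum_nonpos
      intro t ht
      rcases Finset.mem_sdiff.mp ht with ⟨htS, htT⟩
      have htj : t ≠ j := fun h => hS (h ▸ htS)
      have : ¬ (y0 - y j ≤ y t) := fun h =>
        htT (Finset.mem_filter.mpr ⟨Finset.mem_univ t, htj, h⟩)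
      exact mul_nonpos_of_nonneg_of_nonpos (hu t) (by linarith)
    have hsub : ∑ t ∈ S ∩ T, u t * (y j + y t - y0) ≤ ∑ t ∈ T, u t * (y j + y t - y0) := by
      apply Finset.sum_le_sum_of_subset_of_nonneg (Finset.inter_subset_right)
      intro t htT _
      have := (Finset.mem_filter.mp htT).2.2
      exact mul_nonneg (hu t) (by linarith)
    linarith
  -- Over S ↔ f S ≤ xj
  have key : ∀ S : Finset (Fin n), j ∉ S →
      (Over S ↔ (u0 + ∑ t ∈ insert j S, u t) * y j - ∑ t ∈ S, u t * (y0 - y t) ≤ xj) := by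
    intro S hS
    rw [hOver S]
    set A := u0 + ∑ t ∈ insert j S, u t with hA
    have hApos : 0 < A := add_pos_of_pos_of_nonneg hu0
      (Finset.sum_nonneg fun t _ => hu t)
    have h1 : ∑ t ∈ S, u t * A⁻¹ * y t = A⁻¹ * ∑ t ∈ S, u t * y t := by
      rw [Finset.mul_sum]
      exact Finset.sum_congr rfl fun t _ => by ring
    have h2 : ∑ t ∈ S, u t * (y0 - y t) = (∑ t ∈ S, u t) * y0 - ∑ t ∈ S, u t * y t := by
      rw [Finset.sum_mul, ← Finset.sum_sub_distrib]
      exact Finset.sum_congr rfl fun t _ => by ring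
    have hAe : A = u0 + u j + ∑ t ∈ S, u t := by rw [hA, Finset.sum_insert hS]; ring
    have hrhs : A⁻¹ * xj + (1 - (u0 + u j) * A⁻¹) * y0 - ∑ t ∈ S, u t * A⁻¹ * y t
        = (xj + ∑ t ∈ S, u t * (y0 - y t)) / A := by
      rw [h1, h2, eq_div_iff hApos.ne']
      have hAinv : A⁻¹ * A = 1 := inv_mul_cancel₀ hApos.ne'
      linear_combination (xj - (u0 + u j) * y0 - ∑ t ∈ S, u t * y t) * hAinv
        + y0 * hAe
    rw [hrhs, le_div_iff₀ hApos]
    constructor <;> intro h <;> linarith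
  constructor
  · constructor
    · intro h; exact h T hjT
    · intro hTov S hS
      rw [key S hS]
      exact le_trans (hmax S hS) ((key T hjT).mp hTov)
  · exact hmax
end

section
/- For every j ∈ N, conv(B_j) = conv(B_j^≤) ∩ conv(B_j^≥). -/
/-!
Each of the three sets is the union of its `x = 0` and `x = 1` layers, both convex, so its convex
hull is the convex join of the two layers. Scaling by `1 - x` and `x`, a point `(x, c)` with
`0 < x < 1` lies in that join iff `c = A + B` with `A, B` in the cone `0 ≤ y_t ≤ y₀`, of weights
`1 - x` and `x`, and with `A_j = 0` (for `B_j^≤`), `B_j = B₀` (for `B_j^≥`), or both (for `B_j`).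
Once `A_j = 0` and `B_j = B₀` are imposed, `A = (c₀ - c_j, v)` is forced to have
`max 0 (c_t - c_j) ≤ v_t ≤ min (c₀ - c_j) c_t` and `v_j = 0`. A splitting for `B_j^≤` shows that
the weight at the upper corner of this box is at least the target, one for `B_j^≥` that the weight
at the lower corner is at most the target, and the intermediate value theorem gives `v`.
-/

open Set

theorem mem_convexJoin_singleton_zero_prod_singleton_one_prod {𝕜 E : Type*} [Ring 𝕜]
    [PartialOrder 𝕜] [IsOrderedRing 𝕜] [AddCommGroup E] [Module 𝕜 E] {s t : Set E} {p : 𝕜 × E} :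
    p ∈ convexJoin 𝕜 ({(0 : 𝕜)} ×ˢ s) ({(1 : 𝕜)} ×ˢ t) ↔
      p.1 ∈ Icc 0 1 ∧ ∃ a ∈ s, ∃ b ∈ t, (1 - p.1) • a + p.1 • b = p.2 := by
  rw [mem_convexJoin]
  constructor
  · rintro ⟨⟨_, a⟩, ⟨rfl, ha⟩, ⟨_, b⟩, ⟨rfl, hb⟩, θ, σ, hθ, hσ, hθσ, rfl⟩
    obtain rfl : θ = 1 - σ := eq_sub_of_add_eq hθσ
    simp only [Prod.smul_mk, Prod.mk_add_mk, smul_eq_mul, mul_zero, mul_one, zero_add]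
    exact ⟨⟨hσ, sub_nonneg.1 hθ⟩, a, ha, b, hb, rfl⟩
  · rintro ⟨⟨hx0, hx1⟩, a, ha, b, hb, hab⟩
    refine ⟨(0, a), ⟨rfl, ha⟩, (1, b), ⟨rfl, hb⟩, 1 - p.1, p.1, sub_nonneg.2 hx1, hx0,
      sub_add_cancel 1 p.1, ?_⟩
    ext <;> simp [hab]

theorem convexHull_singleton_zero_prod_union {𝕜 E : Type*} [Field 𝕜] [LinearOrder 𝕜]
    [IsStrictOrderedRing 𝕜] [AddCommGroup E] [Module 𝕜 E] {s t : Set E} (hs : Convex 𝕜 s)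
    (ht : Convex 𝕜 t) (hs' : s.Nonempty) (ht' : t.Nonempty) :
    convexHull 𝕜 ({(0 : 𝕜)} ×ˢ s ∪ {(1 : 𝕜)} ×ˢ t) =
      convexJoin 𝕜 ({(0 : 𝕜)} ×ˢ s) ({(1 : 𝕜)} ×ˢ t) :=
  ((convex_singleton 0).prod hs).convexHull_union ((convex_singleton 1).prod ht)
    ((singleton_nonempty 0).prod hs') ((singleton_nonempty 1).prod ht')

variable {ι : Type*}

def boxCone (ι : Type*) : ConvexCone ℝ (ℝ × (ι → ℝ)) where
  carrier := {y | ∀ t, 0 ≤ y.2 t ∧ y.2 t ≤ y.1}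
  smul_mem' _ hc _ hy t := ⟨mul_nonneg hc.le (hy t).1, mul_le_mul_of_nonneg_left (hy t).2 hc.le⟩
  add_mem' _ hy _ hz t := ⟨add_nonneg (hy t).1 (hz t).1, add_le_add (hy t).2 (hz t).2⟩

section Corners

variable (c : ℝ × (ι → ℝ)) (j : ι)

def lowerCorner : ι → ℝ := fun t => max 0 (c.2 t - c.2 j)

def upperCorner [DecidableEq ι] : ι → ℝ := fun t => if t = j then 0 else min (c.1 - c.2 j) (c.2 t)

variable {c j}

theorem lowerCorner_add_le {P Q : ℝ × (ι → ℝ)} (hP : P ∈ boxCone ι) (hQ : Q ∈ boxCone ι)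
    (hQj : Q.2 j = Q.1) : lowerCorner (P + Q) j ≤ P.2 := fun t => by
  refine max_le (hP t).1 ?_
  simp only [Prod.snd_add, Pi.add_apply, hQj]
  linarith [(hQ t).2, (hP j).1]

variable [DecidableEq ι]

theorem lowerCorner_le_upperCorner (hc : c ∈ boxCone ι) : lowerCorner c j ≤ upperCorner c j :=
  fun t => by
    by_cases ht : t = j
    · simp [lowerCorner, upperCorner, ht]
    · simp only [lowerCorner, upperCorner, if_neg ht]
      exact max_le (le_min (by linarith [(hc j).2]) (hc t).1)
        (le_min (by linarith [(hc t).2]) (by linarith [(hc j).1]))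

theorem le_upperCorner_add {P Q : ℝ × (ι → ℝ)} (hP : P ∈ boxCone ι) (hQ : Q ∈ boxCone ι)
    (hPj : P.2 j = 0) : P.2 ≤ upperCorner (P + Q) j := fun t => by
  by_cases ht : t = j
  · simp [upperCorner, ht, hPj]
  · simp only [upperCorner, if_neg ht, Prod.fst_add, Prod.snd_add, Pi.add_apply, hPj]
    exact le_min (by linarith [(hP t).2, (hQ j).2]) (by linarith [(hQ t).1])

theorem mem_boxCone_of_mem_Icc_corners (hc : c ∈ boxCone ι) {v : ι → ℝ}
    (hv : v ∈ Icc (lowerCorner c j) (upperCorner c j)) :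
    v j = 0 ∧ (c.1 - c.2 j, v) ∈ boxCone ι ∧ (c.2 j, c.2 - v) ∈ boxCone ι := by
  have hC : ∀ t, upperCorner c j t ≤ c.2 t ∧ upperCorner c j t ≤ c.1 - c.2 j := fun t => by
    by_cases ht : t = j
    · simp only [upperCorner, if_pos ht]
      exact ⟨(hc t).1, by linarith [(hc j).2]⟩
    · simp only [upperCorner, if_neg ht]
      exact ⟨min_le_right _ _, min_le_left _ _⟩
  refine ⟨le_antisymm (by simpa [upperCorner] using hv.2 j) (by simpa [lowerCorner] using hv.1 j),
    fun t => ⟨?_, ?_⟩, fun t => ⟨?_, ?_⟩⟩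
  · exact (le_max_left _ _).trans (hv.1 t)
  · exact (hv.2 t).trans (hC t).2
  · exact sub_nonneg.2 ((hv.2 t).trans (hC t).1)
  · exact sub_le_comm.1 ((le_max_right _ _).trans (hv.1 t))

end Corners

variable [Fintype ι]

theorem exists_mem_Icc_dotProduct_eq (w : ι → ℝ) {L C : ι → ℝ} (hLC : L ≤ C) {T : ℝ}
    (hL : w ⬝ᵥ L ≤ T) (hC : T ≤ w ⬝ᵥ C) : ∃ v ∈ Icc L C, w ⬝ᵥ v = T :=
  (convex_Icc L C).isPreconnected.intermediate_value (left_mem_Icc.2 hLC) (right_mem_Icc.2 hLC)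
    (by unfold dotProduct; fun_prop) ⟨hL, hC⟩

def weight (u0 : ℝ) (u : ι → ℝ) : ℝ × (ι → ℝ) →ₗ[ℝ] ℝ where
  toFun y := u0 * y.1 + u ⬝ᵥ y.2
  map_add' y z := by
    simp only [Prod.fst_add, Prod.snd_add, dotProduct_add]
    ring
  map_smul' c y := by
    simp only [Prod.smul_fst, Prod.smul_snd, dotProduct_smul, smul_eq_mul, RingHom.id_apply]
    ring

theorem weight_apply (u0 : ℝ) (u : ι → ℝ) (y : ℝ × (ι → ℝ)) :
    weight u0 u y = u0 * y.1 + u ⬝ᵥ y.2 := rfl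

/-- The set `Y` of the paper. -/
def boxSlice (u0 : ℝ) (u : ι → ℝ) : Set (ℝ × (ι → ℝ)) :=
  {y | weight u0 u y = 1 ∧ y ∈ boxCone ι}

variable {u0 : ℝ} {u : ι → ℝ}

theorem exists_boxCone_add_eq (hu0 : 0 ≤ u0) (hu : 0 ≤ u) (j : ι) {P Q P' Q' : ℝ × (ι → ℝ)}
    (hP : P ∈ boxCone ι) (hQ : Q ∈ boxCone ι) (hP' : P' ∈ boxCone ι) (hQ' : Q' ∈ boxCone ι)
    (hPj : P.2 j = 0) (hQ'j : Q'.2 j = Q'.1) (hPQ : P' + Q' = P + Q)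
    (hw : weight u0 u P' = weight u0 u P) :
    ∃ A ∈ boxCone ι, ∃ B ∈ boxCone ι, A.2 j = 0 ∧ B.2 j = B.1 ∧ A + B = P + Q ∧
      weight u0 u A = weight u0 u P := by
  classical
  have hc : P + Q ∈ boxCone ι := (boxCone ι).add_mem hP hQ
  have hgapP' : (P + Q).1 - (P + Q).2 j ≤ P'.1 := by
    simp only [← hPQ, Prod.fst_add, Prod.snd_add, Pi.add_apply, hQ'j]
    linarith [(hP' j).1]
  have hgapP : P.1 ≤ (P + Q).1 - (P + Q).2 j := by
    simp only [Prod.fst_add, Prod.snd_add, Pi.add_apply, hPj]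
    linarith [(hQ j).2]
  obtain ⟨v, hv, hvw⟩ := exists_mem_Icc_dotProduct_eq u (lowerCorner_le_upperCorner hc)
    (T := weight u0 u P - u0 * ((P + Q).1 - (P + Q).2 j))
    (calc u ⬝ᵥ lowerCorner (P + Q) j
        ≤ u ⬝ᵥ P'.2 :=
          dotProduct_le_dotProduct_of_nonneg_left (hPQ ▸ lowerCorner_add_le hP' hQ' hQ'j) hu
      _ = weight u0 u P - u0 * P'.1 := by rw [← hw, weight_apply]; ring
      _ ≤ _ := by gcongr)
    (calc _ ≤ weight u0 u P - u0 * P.1 := by gcongr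
      _ = u ⬝ᵥ P.2 := by rw [weight_apply]; ring
      _ ≤ u ⬝ᵥ upperCorner (P + Q) j :=
        dotProduct_le_dotProduct_of_nonneg_left (le_upperCorner_add hP hQ hPj) hu)
  obtain ⟨hvj, hA, hB⟩ := mem_boxCone_of_mem_Icc_corners hc hv
  exact ⟨_, hA, _, hB, hvj, by simp [hvj], by ext <;> simp, by rw [weight_apply, hvw]; ring⟩

theorem smul_mem_boxCone_of_mem_boxSlice {y : ℝ × (ι → ℝ)} (hy : y ∈ boxSlice u0 u) {r : ℝ}
    (hr : 0 < r) : r • y ∈ boxCone ι ∧ weight u0 u (r • y) = r := by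
  refine ⟨(boxCone ι).smul_mem hr hy.2, ?_⟩
  rw [map_smul, hy.1, smul_eq_mul, mul_one]

theorem inv_smul_mem_boxSlice {y : ℝ × (ι → ℝ)} (hy : y ∈ boxCone ι) {r : ℝ} (hr : 0 < r)
    (hw : weight u0 u y = r) : r⁻¹ • y ∈ boxSlice u0 u := by
  refine ⟨?_, (boxCone ι).smul_mem (inv_pos.2 hr) hy⟩
  rw [map_smul, hw, smul_eq_mul, inv_mul_cancel₀ hr.ne']

theorem convex_boxSlice : Convex ℝ (boxSlice u0 u) :=
  (convex_hyperplane (weight u0 u).isLinear 1).inter (boxCone ι).convex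

theorem convex_sep_boxSlice_snd_eq_zero (j : ι) : Convex ℝ {y ∈ boxSlice u0 u | y.2 j = 0} := by
  refine convex_boxSlice.inter fun y (hy : y.2 j = 0) z (hz : z.2 j = 0) a b _ _ _ => ?_
  show (a • y + b • z).2 j = 0
  simp [hy, hz]

theorem convex_sep_boxSlice_snd_eq_fst (j : ι) :
    Convex ℝ {y ∈ boxSlice u0 u | y.2 j = y.1} := by
  refine convex_boxSlice.inter fun y (hy : y.2 j = y.1) z (hz : z.2 j = z.1) a b _ _ _ => ?_
  show (a • y + b • z).2 j = (a • y + b • z).1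
  simp [hy, hz]

theorem nonempty_sep_boxSlice_snd_eq_zero (hu0 : 0 < u0) (j : ι) :
    {y ∈ boxSlice u0 u | y.2 j = 0}.Nonempty :=
  ⟨(u0⁻¹, 0), ⟨by simp [weight_apply, hu0.ne'], fun _ => ⟨le_rfl, by positivity⟩⟩, rfl⟩

theorem nonempty_sep_boxSlice_snd_eq_fst (hu0 : 0 < u0) (hu : 0 ≤ u) (j : ι) :
    {y ∈ boxSlice u0 u | y.2 j = y.1}.Nonempty := by
  have hpos : 0 < u0 + ∑ t, u t :=
    add_pos_of_pos_of_nonneg hu0 (Finset.sum_nonneg fun t _ => hu t)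
  refine ⟨((u0 + ∑ t, u t)⁻¹, fun _ => (u0 + ∑ t, u t)⁻¹),
    ⟨?_, fun _ => ⟨by positivity, le_rfl⟩⟩, rfl⟩
  rw [weight_apply, dotProduct, ← Finset.sum_mul, ← add_mul, mul_inv_cancel₀ hpos.ne']

theorem exists_combination_mem_sep_boxSlice (hu0 : 0 ≤ u0) (hu : 0 ≤ u) {j : ι} {x : ℝ}
    (hx : x ∈ Icc 0 1) {a b a' b' c : ℝ × (ι → ℝ)}
    (ha : a ∈ {y ∈ boxSlice u0 u | y.2 j = 0}) (hb : b ∈ boxSlice u0 u)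
    (ha' : a' ∈ boxSlice u0 u) (hb' : b' ∈ {y ∈ boxSlice u0 u | y.2 j = y.1})
    (hab : (1 - x) • a + x • b = c) (hab' : (1 - x) • a' + x • b' = c) :
    ∃ α ∈ {y ∈ boxSlice u0 u | y.2 j = 0}, ∃ β ∈ {y ∈ boxSlice u0 u | y.2 j = y.1},
      (1 - x) • α + x • β = c := by
  rcases hx.1.eq_or_lt with rfl | hx0
  · exact ⟨a, ha, b', hb', by simpa using hab⟩
  rcases hx.2.eq_or_lt with rfl | hx1
  · exact ⟨a, ha, b', hb', by simpa using hab'⟩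
  have h1x : 0 < 1 - x := sub_pos.2 hx1
  obtain ⟨hPK, hPw⟩ := smul_mem_boxCone_of_mem_boxSlice ha.1 h1x
  obtain ⟨hQK, hQw⟩ := smul_mem_boxCone_of_mem_boxSlice hb hx0
  obtain ⟨hP'K, hP'w⟩ := smul_mem_boxCone_of_mem_boxSlice ha' h1x
  obtain ⟨hQ'K, -⟩ := smul_mem_boxCone_of_mem_boxSlice hb'.1 hx0
  obtain ⟨A, hA, B, hB, hAj, hBj, hAB, hAw⟩ := exists_boxCone_add_eq hu0 hu j hPK hQK hP'K hQ'K
    (by simp [ha.2]) (by simp [hb'.2]) (hab'.trans hab.symm) (hP'w.trans hPw.symm)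
  have hBw : weight u0 u B = x := by
    have := congrArg (weight u0 u) hAB
    rw [map_add, map_add, hAw, hPw, hQw] at this
    linarith
  refine ⟨(1 - x)⁻¹ • A, ⟨inv_smul_mem_boxSlice hA h1x (hAw.trans hPw), by simp [hAj]⟩,
    x⁻¹ • B, ⟨inv_smul_mem_boxSlice hB hx0 hBw, by simp [hBj]⟩, ?_⟩
  rw [smul_inv_smul₀ h1x.ne', smul_inv_smul₀ hx0.ne', hAB, hab]

theorem convexJoin_inter_convexJoin (hu0 : 0 ≤ u0) (hu : 0 ≤ u) (j : ι) :
    convexJoin ℝ ({(0 : ℝ)} ×ˢ {y ∈ boxSlice u0 u | y.2 j = 0}) ({(1 : ℝ)} ×ˢ boxSlice u0 u) ∩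
        convexJoin ℝ ({(0 : ℝ)} ×ˢ boxSlice u0 u)
          ({(1 : ℝ)} ×ˢ {y ∈ boxSlice u0 u | y.2 j = y.1}) =
      convexJoin ℝ ({(0 : ℝ)} ×ˢ {y ∈ boxSlice u0 u | y.2 j = 0})
        ({(1 : ℝ)} ×ˢ {y ∈ boxSlice u0 u | y.2 j = y.1}) := by
  refine Subset.antisymm (fun p ⟨h, h'⟩ => ?_) (subset_inter ?_ ?_)
  · simp only [mem_convexJoin_singleton_zero_prod_singleton_one_prod] at h h' ⊢
    obtain ⟨hx, a, ha, b, hb, hab⟩ := h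
    obtain ⟨-, a', ha', b', hb', hab'⟩ := h'
    exact ⟨hx, exists_combination_mem_sep_boxSlice hu0 hu hx ha hb ha' hb' hab hab'⟩
  · exact convexJoin_mono Subset.rfl (prod_mono Subset.rfl (sep_subset _ _))
  · exact convexJoin_mono (prod_mono Subset.rfl (sep_subset _ _)) Subset.rfl

variable (u0 u) in
/-- `B_j`, `B_j^≤` and `B_j^≥` are `bilinearSet u0 u j R` for `R` equal to `=`, `≤` and `≥`. -/
def bilinearSet (j : ι) (R : ℝ → ℝ → Prop) : Set (ℝ × ℝ × (ι → ℝ)) :=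
  {p | (p.1 = 0 ∨ p.1 = 1) ∧ p.2 ∈ boxSlice u0 u ∧ R (p.2.2 j) (p.2.1 * p.1)}

theorem bilinearSet_eq_union (j : ι) (R : ℝ → ℝ → Prop) : bilinearSet u0 u j R =
    {(0 : ℝ)} ×ˢ {y ∈ boxSlice u0 u | R (y.2 j) 0} ∪
      {(1 : ℝ)} ×ˢ {y ∈ boxSlice u0 u | R (y.2 j) y.1} := by
  ext ⟨x, y⟩
  simp only [bilinearSet, mem_ofPred_eq, mem_union, mem_prod, mem_singleton_iff]
  constructor
  · rintro ⟨rfl | rfl, hy, h⟩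
    · exact .inl ⟨rfl, hy, by simpa using h⟩
    · exact .inr ⟨rfl, hy, by simpa using h⟩
  · rintro (⟨rfl, hy, h⟩ | ⟨rfl, hy, h⟩)
    · exact ⟨.inl rfl, hy, by simpa using h⟩
    · exact ⟨.inr rfl, hy, by simpa using h⟩

theorem convexHull_bilinearSet_eq_inter (hu0 : 0 < u0) (hu : 0 ≤ u) (j : ι) :
    convexHull ℝ (bilinearSet u0 u j (· = ·)) =
      convexHull ℝ (bilinearSet u0 u j (· ≤ ·)) ∩ convexHull ℝ (bilinearSet u0 u j (· ≥ ·)) := by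
  have hle0 : {y ∈ boxSlice u0 u | y.2 j ≤ 0} = {y ∈ boxSlice u0 u | y.2 j = 0} :=
    sep_ext_iff.2 fun y hy => ⟨fun h => h.antisymm (hy.2 j).1, le_of_eq⟩
  have hle1 : {y ∈ boxSlice u0 u | y.2 j ≤ y.1} = boxSlice u0 u :=
    sep_eq_self_iff_mem_true.2 fun y hy => (hy.2 j).2
  have hge0 : {y ∈ boxSlice u0 u | y.2 j ≥ 0} = boxSlice u0 u :=
    sep_eq_self_iff_mem_true.2 fun y hy => (hy.2 j).1
  have hge1 : {y ∈ boxSlice u0 u | y.2 j ≥ y.1} = {y ∈ boxSlice u0 u | y.2 j = y.1} :=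
    sep_ext_iff.2 fun y hy => ⟨fun h => (hy.2 j).2.antisymm h, ge_of_eq⟩
  have hY0 := nonempty_sep_boxSlice_snd_eq_zero (u := u) hu0 j
  have hY1 := nonempty_sep_boxSlice_snd_eq_fst hu0 hu j
  have hY := hY0.mono (sep_subset _ _)
  have hcY0 := convex_sep_boxSlice_snd_eq_zero (u0 := u0) (u := u) j
  have hcY1 := convex_sep_boxSlice_snd_eq_fst (u0 := u0) (u := u) j
  simp only [bilinearSet_eq_union, hle0, hle1, hge0, hge1]
  rw [convexHull_singleton_zero_prod_union hcY0 hcY1 hY0 hY1,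
    convexHull_singleton_zero_prod_union hcY0 convex_boxSlice hY0 hY,
    convexHull_singleton_zero_prod_union convex_boxSlice hcY1 hY hY1,
    convexJoin_inter_convexJoin hu0.le hu j]

theorem stmt12_general (n : ℕ) (u0 : ℝ) (hu0 : 0 < u0)
    (u : Fin n → ℝ) (hu : ∀ t, 0 ≤ u t) (j : Fin n) :
    convexHull ℝ {p : ℝ × ℝ × (Fin n → ℝ) |
        (p.1 = 0 ∨ p.1 = 1) ∧
        (u0 * p.2.1 + ∑ t, u t * p.2.2 t = 1 ∧ ∀ t, 0 ≤ p.2.2 t ∧ p.2.2 t ≤ p.2.1) ∧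
        p.2.2 j = p.2.1 * p.1} =
      convexHull ℝ {p : ℝ × ℝ × (Fin n → ℝ) |
        (p.1 = 0 ∨ p.1 = 1) ∧
        (u0 * p.2.1 + ∑ t, u t * p.2.2 t = 1 ∧ ∀ t, 0 ≤ p.2.2 t ∧ p.2.2 t ≤ p.2.1) ∧
        p.2.2 j ≤ p.2.1 * p.1} ∩
      convexHull ℝ {p : ℝ × ℝ × (Fin n → ℝ) |
        (p.1 = 0 ∨ p.1 = 1) ∧
        (u0 * p.2.1 + ∑ t, u t * p.2.2 t = 1 ∧ ∀ t, 0 ≤ p.2.2 t ∧ p.2.2 t ≤ p.2.1) ∧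
        p.2.1 * p.1 ≤ p.2.2 j} :=
  convexHull_bilinearSet_eq_inter hu0 hu j

/-- Decomposition lemma: `conv(B_j) = conv(B_j^≤) ∩ conv(B_j^≥)`. -/
theorem stmt12 (n : ℕ) (hn : 1 ≤ n) (u0 : ℝ) (hu0 : 0 < u0)
    (u : Fin n → ℝ) (hu : ∀ t, 0 ≤ u t) (j : Fin n) :
    convexHull ℝ {p : ℝ × ℝ × (Fin n → ℝ) |
        (p.1 = 0 ∨ p.1 = 1) ∧
        (u0 * p.2.1 + ∑ t, u t * p.2.2 t = 1 ∧ ∀ t, 0 ≤ p.2.2 t ∧ p.2.2 t ≤ p.2.1) ∧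
        p.2.2 j = p.2.1 * p.1} =
      convexHull ℝ {p : ℝ × ℝ × (Fin n → ℝ) |
        (p.1 = 0 ∨ p.1 = 1) ∧
        (u0 * p.2.1 + ∑ t, u t * p.2.2 t = 1 ∧ ∀ t, 0 ≤ p.2.2 t ∧ p.2.2 t ≤ p.2.1) ∧
        p.2.2 j ≤ p.2.1 * p.1} ∩
      convexHull ℝ {p : ℝ × ℝ × (Fin n → ℝ) |
        (p.1 = 0 ∨ p.1 = 1) ∧
        (u0 * p.2.1 + ∑ t, u t * p.2.2 t = 1 ∧ ∀ t, 0 ≤ p.2.2 t ∧ p.2.2 t ≤ p.2.1) ∧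
        p.2.1 * p.1 ≤ p.2.2 j} :=
  stmt12_general n u0 hu0 u hu j
end

section
/- Fix j ∈ N. Then conv(B_j^≤) = {(x_j, y₀, y) : x_j ∈ [0,1], (y₀,y) ∈ Y, and Over(j,S) holds for every S ⊆ N\{j}}. -/
lemma over_iff_aux (u0 uj A B x y0 yj : ℝ) (hU : 0 < u0 + uj + A) :
    yj ≤ (u0 + uj + A)⁻¹ * x + (1 - (u0 + uj) * (u0 + uj + A)⁻¹) * y0 - (u0 + uj + A)⁻¹ * B ↔
      (u0 + uj) * yj + (A * yj + B - A * y0) ≤ x := by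
  set U := u0 + uj + A with hUdef
  have hU' : U ≠ 0 := hU.ne'
  have h1 : (U⁻¹ * x + (1 - (u0 + uj) * U⁻¹) * y0 - U⁻¹ * B) - yj
      = U⁻¹ * (x - ((u0 + uj) * yj + (A * yj + B - A * y0))) := by
    field_simp
    ring
  rw [← sub_nonneg, h1, mul_nonneg_iff_of_pos_left (inv_pos.mpr hU), sub_nonneg]

lemma sum_mul_rw1 {n : ℕ} (S : Finset (Fin n)) (u y : Fin n → ℝ) (C : ℝ) :
    ∑ t ∈ S, u t * C * y t = C * ∑ t ∈ S, u t * y t := by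
  rw [Finset.mul_sum]
  exact Finset.sum_congr rfl fun t _ => by ring

/-- The `Over(j,S)` inequalities describe `conv(B_j^≤)`. -/
theorem stmt14 (n : ℕ) (hn : 1 ≤ n) (u0 : ℝ) (hu0 : 0 < u0)
    (u : Fin n → ℝ) (hu : ∀ t, 0 ≤ u t) (j : Fin n) :
    convexHull ℝ {p : ℝ × ℝ × (Fin n → ℝ) |
        (p.1 = 0 ∨ p.1 = 1) ∧
        (u0 * p.2.1 + ∑ t, u t * p.2.2 t = 1 ∧ ∀ t, 0 ≤ p.2.2 t ∧ p.2.2 t ≤ p.2.1) ∧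
        p.2.2 j ≤ p.2.1 * p.1} =
      {p : ℝ × ℝ × (Fin n → ℝ) |
        (0 ≤ p.1 ∧ p.1 ≤ 1) ∧
        (u0 * p.2.1 + ∑ t, u t * p.2.2 t = 1 ∧ ∀ t, 0 ≤ p.2.2 t ∧ p.2.2 t ≤ p.2.1) ∧
        ∀ S : Finset (Fin n), j ∉ S →
          p.2.2 j ≤ (u0 + ∑ t ∈ insert j S, u t)⁻¹ * p.1 +
              (1 - (u0 + u j) * (u0 + ∑ t ∈ insert j S, u t)⁻¹) * p.2.1 -
              ∑ t ∈ S, u t * (u0 + ∑ s ∈ insert j S, u s)⁻¹ * p.2.2 t} := by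
  have hins : ∀ S : Finset (Fin n), j ∉ S →
      u0 + ∑ t ∈ insert j S, u t = u0 + u j + ∑ t ∈ S, u t := by
    intro S hS
    rw [Finset.sum_insert hS]
    ring
  have hApos : ∀ S : Finset (Fin n), (0:ℝ) ≤ ∑ t ∈ S, u t :=
    fun S => Finset.sum_nonneg fun t _ => hu t
  have hUpos : ∀ S : Finset (Fin n), (0:ℝ) < u0 + u j + ∑ t ∈ S, u t := by
    intro S
    have := hApos S
    have := hu j
    linarith
  apply Set.Subset.antisymm
  · -- easy direction: convexHull ⊆ RHS
    apply convexHull_min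
    · rintro ⟨x, y0, y⟩ ⟨hx01, ⟨hsum, hbd⟩, hxy⟩
      refine ⟨?_, ⟨hsum, hbd⟩, ?_⟩
      · rcases hx01 with h | h
        · have h' : x = 0 := h
          constructor <;> simp [h']
        · have h' : x = 1 := h
          constructor <;> simp [h']
      · intro S hjS
        simp only at *
        rw [hins S hjS, sum_mul_rw1]
        rw [over_iff_aux u0 (u j) _ _ _ _ _ (hUpos S)]
        have hA := hApos S
        have hAy : (∑ t ∈ S, u t) * y j ≤ (∑ t ∈ S, u t) * y0 :=
          mul_le_mul_of_nonneg_left (hbd j).2 hA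
        have hBle : ∑ t ∈ S, u t * y t ≤ (∑ t ∈ S, u t) * y0 := by
          rw [Finset.sum_mul]
          exact Finset.sum_le_sum fun t _ => mul_le_mul_of_nonneg_left (hbd t).2 (hu t)
        rcases hx01 with h | h
        · subst h
        -- x = 0 : y j = 0
          have hyj0 : y j = 0 := le_antisymm (by simpa using hxy) (hbd j).1
          rw [hyj0]
          simp only [mul_zero, zero_add]
          linarith
        · subst h
          have hIns : ∑ t ∈ insert j S, u t * y t ≤ ∑ t, u t * y t :=
            Finset.sum_le_sum_of_subset_of_nonneg (Finset.subset_univ _)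
              (fun t _ _ => mul_nonneg (hu t) (hbd t).1)
          rw [Finset.sum_insert hjS] at hIns
          have h1 : u0 * y j ≤ u0 * y0 := mul_le_mul_of_nonneg_left (hbd j).2 hu0.le
          linarith
    · -- RHS is convex
      intro p hp q hq a b ha hb hab
      obtain ⟨⟨hp0, hp1⟩, ⟨hpsum, hpbd⟩, hpov⟩ := hp
      obtain ⟨⟨hq0, hq1⟩, ⟨hqsum, hqbd⟩, hqov⟩ := hq
      have hx1 : (a • p + b • q).1 = a * p.1 + b * q.1 := rfl
      have hy0 : (a • p + b • q).2.1 = a * p.2.1 + b * q.2.1 := rfl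
      have hyt : ∀ t, (a • p + b • q).2.2 t = a * p.2.2 t + b * q.2.2 t := fun t => rfl
      have hsplit : ∀ S : Finset (Fin n),
          ∑ t ∈ S, u t * (a * p.2.2 t + b * q.2.2 t)
            = a * ∑ t ∈ S, u t * p.2.2 t + b * ∑ t ∈ S, u t * q.2.2 t := by
        intro S
        rw [Finset.mul_sum, Finset.mul_sum, ← Finset.sum_add_distrib]
        exact Finset.sum_congr rfl fun t _ => by ring
      refine ⟨⟨?_, ?_⟩, ⟨?_, ?_⟩, ?_⟩
      · rw [hx1]; exact add_nonneg (mul_nonneg ha hp0) (mul_nonneg hb hq0)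
      · rw [hx1]
        nlinarith [mul_le_mul_of_nonneg_left hp1 ha, mul_le_mul_of_nonneg_left hq1 hb]
      · rw [hy0]
        have : ∑ t, u t * (a • p + b • q).2.2 t
            = a * ∑ t, u t * p.2.2 t + b * ∑ t, u t * q.2.2 t := by
          rw [Finset.sum_congr rfl fun t _ => by rw [hyt t]]
          exact hsplit Finset.univ
        rw [this]
        linear_combination a * hpsum + b * hqsum + hab
      · intro t
        rw [hyt t, hy0]
        constructor
        · exact add_nonneg (mul_nonneg ha (hpbd t).1) (mul_nonneg hb (hqbd t).1)
        · have h1 := mul_le_mul_of_nonneg_left (hpbd t).2 ha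
          have h2 := mul_le_mul_of_nonneg_left (hqbd t).2 hb
          linarith
      · intro S hjS
        have hEp := hpov S hjS
        have hEq := hqov S hjS
        rw [hins S hjS, sum_mul_rw1, over_iff_aux u0 (u j) _ _ _ _ _ (hUpos S)] at hEp hEq ⊢
        have hrw : ∑ t ∈ S, u t * (a • p + b • q).2.2 t
            = a * ∑ t ∈ S, u t * p.2.2 t + b * ∑ t ∈ S, u t * q.2.2 t := by
          rw [← hsplit S]
          exact Finset.sum_congr rfl fun t _ => by rw [hyt t]
        rw [hx1, hy0, hyt j, hrw]
        nlinarith [mul_le_mul_of_nonneg_left hEp ha, mul_le_mul_of_nonneg_left hEq hb]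
  · -- hard direction
    rintro ⟨x, y0, y⟩ ⟨⟨hx0, hx1⟩, ⟨hsum, hbd⟩, hov⟩
    simp only at hsum hbd hov hx0 hx1
    have hov' : ∀ S : Finset (Fin n), j ∉ S →
        (u0 + u j) * y j + ((∑ t ∈ S, u t) * y j + (∑ t ∈ S, u t * y t)
          - (∑ t ∈ S, u t) * y0) ≤ x := by
      intro S hjS
      have h := hov S hjS
      rw [hins S hjS, sum_mul_rw1, over_iff_aux u0 (u j) _ _ _ _ _ (hUpos S)] at h
      exact h
    rcases eq_or_lt_of_le hx0 with hx0' | hx0'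
    · -- x = 0
      have h := hov' ∅ (Finset.notMem_empty j)
      simp only [Finset.sum_empty, zero_mul, add_zero, zero_add, mul_zero, zero_sub,
        sub_zero] at h
      have hyj : y j = 0 := by
        have h0 := (hbd j).1
        have huj := hu j
        nlinarith
      apply subset_convexHull
      refine ⟨Or.inl hx0'.symm, ⟨hsum, hbd⟩, ?_⟩
      simp only [← hx0', mul_zero, hyj, le_refl]
    rcases eq_or_lt_of_le hx1 with hx1' | hx1'
    · -- x = 1
      apply subset_convexHull
      refine ⟨Or.inr hx1', ⟨hsum, hbd⟩, ?_⟩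
      simp only [hx1', mul_one]
      exact (hbd j).2
    -- 0 < x < 1
    set δ := y0 - y j with hδdef
    have hδ0 : 0 ≤ δ := sub_nonneg.mpr (hbd j).2
    have hδle : δ ≤ y0 := by
      have := (hbd j).1
      rw [hδdef]; linarith
    set m : Fin n → ℝ := fun t => if t = j then 0 else min (y t) δ with hmdef
    have hm0 : ∀ t, 0 ≤ m t := by
      intro t
      simp only [hmdef]
      split_ifs
      · exact le_refl 0
      · exact le_min (hbd t).1 hδ0
    have hmy : ∀ t, m t ≤ y t := by
      intro t
      simp only [hmdef]
      split_ifs with h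
      · exact (hbd t).1
      · exact min_le_left _ _
    have hmδ : ∀ t, m t ≤ δ := by
      intro t
      simp only [hmdef]
      split_ifs
      · exact hδ0
      · exact min_le_right _ _
    have hmj : m j = 0 := by simp [hmdef]
    have hkey : ∀ t, t ≠ j → δ - m t ≤ y0 - y t := by
      intro t htj
      simp only [hmdef, if_neg htj]
      rcases le_total (y t) δ with h | h
      · rw [min_eq_left h]
        linarith
      · rw [min_eq_right h]
        linarith [(hbd t).2]
    set σ := u0 * δ + ∑ t, u t * m t with hσdef
    set S' := Finset.univ.filter (fun t => t ≠ j ∧ δ < y t) with hS'def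
    have hjS' : j ∉ S' := by simp [hS'def]
    have hmsum : ∑ t, u t * m t = (∑ t, u t * y t) - u j * y j
        - ((∑ t ∈ S', u t * y t) - (∑ t ∈ S', u t) * δ) := by
      have h1 : ∀ t ∈ Finset.univ, u t * m t =
          u t * y t - (if t = j then u t * y t else 0)
            - (if t ∈ S' then u t * (y t - δ) else 0) := by
        intro t _
        by_cases htj : t = j
        · subst htj
          simp [hmdef, hjS']
        · by_cases hty : δ < y t
          · have hmem : t ∈ S' := by simp [hS'def, htj, hty]
            simp only [hmdef, if_neg htj, if_pos hmem, min_eq_right hty.le]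
            ring
          · have hmem : t ∉ S' := by simp [hS'def, htj, hty]
            simp only [hmdef, if_neg htj, if_neg hmem, min_eq_left (not_lt.mp hty)]
            ring
      have e1 : ∑ t, (if t = j then u t * y t else 0) = u j * y j := by simp
      have e2 : ∑ t, (if t ∈ S' then u t * (y t - δ) else 0)
          = ∑ t ∈ S', u t * (y t - δ) := by
        rw [Finset.sum_ite_mem, Finset.univ_inter]
      have e3 : ∑ t ∈ S', u t * (y t - δ)
          = (∑ t ∈ S', u t * y t) - (∑ t ∈ S', u t) * δ := by
        rw [Finset.sum_mul, ← Finset.sum_sub_distrib]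
        exact Finset.sum_congr rfl fun t _ => by ring
      rw [Finset.sum_congr rfl h1, Finset.sum_sub_distrib, Finset.sum_sub_distrib,
        e1, e2, e3]
    have hE := hov' S' hjS'
    have hσE : σ = 1 - ((u0 + u j) * y j + ((∑ t ∈ S', u t) * y j
        + (∑ t ∈ S', u t * y t) - (∑ t ∈ S', u t) * y0)) := by
      rw [hσdef, hmsum]
      linear_combination hsum + (u0 + ∑ t ∈ S', u t) * hδdef
    have hσx : 1 - x ≤ σ := by linarith
    have hσpos : 0 < σ := by linarith
    set c := (1 - x) * σ⁻¹ with hcdef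
    have hc0 : 0 ≤ c := mul_nonneg (by linarith) (inv_pos.mpr hσpos).le
    have hc1 : c ≤ 1 := by
      rw [hcdef, ← div_eq_mul_inv, div_le_one hσpos]
      exact hσx
    have hcσ : c * σ = 1 - x := by
      rw [hcdef]
      field_simp
    have hxne : x ≠ 0 := hx0'.ne'
    clear_value δ m σ c S'
    have hσne : σ ≠ 0 := hσpos.ne'
    have hpa : ((0:ℝ), δ / σ, fun t => m t / σ) ∈ {p : ℝ × ℝ × (Fin n → ℝ) |
        (p.1 = 0 ∨ p.1 = 1) ∧
        (u0 * p.2.1 + ∑ t, u t * p.2.2 t = 1 ∧ ∀ t, 0 ≤ p.2.2 t ∧ p.2.2 t ≤ p.2.1) ∧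
        p.2.2 j ≤ p.2.1 * p.1} := by
      refine ⟨Or.inl rfl, ⟨?_, ?_⟩, ?_⟩
      · show u0 * (δ / σ) + ∑ t, u t * (m t / σ) = 1
        rw [Finset.sum_congr rfl fun t _ =>
          show u t * (m t / σ) = u t * m t / σ from by ring, ← Finset.sum_div]
        field_simp
        exact hσdef.symm
      · intro t
        constructor
        · exact div_nonneg (hm0 t) hσpos.le
        · show m t / σ ≤ δ / σ
          exact (div_le_div_iff_of_pos_right hσpos).mpr (hmδ t)
      · show m j / σ ≤ (δ / σ) * 0
        simp [hmj]
    have hpb : ((1:ℝ), (y0 - c * δ) / x, fun t => (y t - c * m t) / x) ∈ {p : ℝ × ℝ × (Fin n → ℝ) |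
        (p.1 = 0 ∨ p.1 = 1) ∧
        (u0 * p.2.1 + ∑ t, u t * p.2.2 t = 1 ∧ ∀ t, 0 ≤ p.2.2 t ∧ p.2.2 t ≤ p.2.1) ∧
        p.2.2 j ≤ p.2.1 * p.1} := by
      have hnum : ∀ t, y t - c * m t ≤ y0 - c * δ := by
        intro t
        by_cases htj : t = j
        · subst htj
          rw [hmj, mul_zero, sub_zero]
          nlinarith [mul_le_mul_of_nonneg_right hc1 hδ0]
        · nlinarith [hkey t htj, mul_nonneg (by linarith : (0:ℝ) ≤ 1 - c)
            (by linarith [hmδ t] : (0:ℝ) ≤ δ - m t)]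
      refine ⟨Or.inr rfl, ⟨?_, ?_⟩, ?_⟩
      · show u0 * ((y0 - c * δ) / x) + ∑ t, u t * ((y t - c * m t) / x) = 1
        rw [Finset.sum_congr rfl fun t _ =>
          show u t * ((y t - c * m t) / x) = (u t * y t - c * (u t * m t)) / x from by ring,
          ← Finset.sum_div, Finset.sum_sub_distrib, ← Finset.mul_sum]
        field_simp
        linear_combination hsum + c * hσdef - hcσ
      · intro t
        constructor
        · show 0 ≤ (y t - c * m t) / x
          apply div_nonneg _ hx0'.le
          nlinarith [mul_le_mul_of_nonneg_right hc1 (hm0 t), hmy t]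
        · show (y t - c * m t) / x ≤ (y0 - c * δ) / x
          exact (div_le_div_iff_of_pos_right hx0').mpr (hnum t)
      · show (y j - c * m j) / x ≤ ((y0 - c * δ) / x) * 1
        rw [mul_one]
        exact (div_le_div_iff_of_pos_right hx0').mpr (by rw [hmj]; simpa [hmj] using hnum j)
    apply segment_subset_convexHull hpa hpb
    refine ⟨1 - x, x, by linarith, hx0'.le, by ring, ?_⟩
    simp only [Prod.smul_mk, Prod.mk_add_mk, smul_eq_mul, Prod.mk.injEq]
    refine ⟨by ring, ?_, ?_⟩
    · field_simp
      linear_combination (-δ) * hcσ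
    · funext t
      simp only [Pi.add_apply, Pi.smul_apply, smul_eq_mul]
      field_simp
      linear_combination (-(m t)) * hcσ
end

section
/- Fix j ∈ N. Then conv(B_j) = {(x_j, y₀, y) : x_j ∈ [0,1], (y₀,y) ∈ Y, and both Under(j,S) and Over(j,S) hold for every S ⊆ N\{j}}. -/
lemma inv_mul_le_of_le' {U A B : ℝ} (hU : 0 < U) (h : A ≤ U * B) : U⁻¹ * A ≤ B := by
  have := mul_le_mul_of_nonneg_left h (inv_pos.2 hU).le
  rwa [← mul_assoc, inv_mul_cancel₀ hU.ne', one_mul] at this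

lemma le_inv_mul_of_le' {U A B : ℝ} (hU : 0 < U) (h : U * B ≤ A) : B ≤ U⁻¹ * A := by
  have := mul_le_mul_of_nonneg_left h (inv_pos.2 hU).le
  rwa [← mul_assoc, inv_mul_cancel₀ hU.ne', one_mul] at this

lemma bj_ineqs (n : ℕ) (u0 : ℝ) (hu0 : 0 < u0) (u : Fin n → ℝ) (hu : ∀ t, 0 ≤ u t)
    (j : Fin n) (x y0 : ℝ) (y : Fin n → ℝ)
    (hx : x = 0 ∨ x = 1)
    (heq : u0 * y0 + ∑ t, u t * y t = 1)
    (hy : ∀ t, 0 ≤ y t ∧ y t ≤ y0)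
    (hxy : y j = y0 * x)
    (S : Finset (Fin n)) (hjS : j ∉ S) :
    ((u0 + ∑ t ∈ insert j S, u t)⁻¹ * x -
        ∑ t ∈ Finset.univ \ insert j S, u t * (u0 + ∑ s ∈ insert j S, u s)⁻¹ * y t ≤ y j) ∧
    (y j ≤ (u0 + ∑ t ∈ insert j S, u t)⁻¹ * x +
        (1 - (u0 + u j) * (u0 + ∑ t ∈ insert j S, u t)⁻¹) * y0 -
        ∑ t ∈ S, u t * (u0 + ∑ s ∈ insert j S, u s)⁻¹ * y t) := by
  set U : ℝ := u0 + ∑ t ∈ insert j S, u t with hUdef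
  have hA : (0:ℝ) ≤ ∑ t ∈ insert j S, u t := Finset.sum_nonneg fun t _ => hu t
  have hU : 0 < U := by linarith
  have hUinv : U * U⁻¹ = 1 := mul_inv_cancel₀ hU.ne'
  have hrw : ∀ T : Finset (Fin n), ∑ t ∈ T, u t * U⁻¹ * y t = U⁻¹ * ∑ t ∈ T, u t * y t := by
    intro T
    rw [Finset.mul_sum]
    exact Finset.sum_congr rfl fun t _ => by ring
  have hsplit : ∑ t ∈ Finset.univ \ insert j S, u t * y t + ∑ t ∈ insert j S, u t * y t
      = ∑ t, u t * y t := Finset.sum_sdiff (Finset.subset_univ _)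
  have hins : ∑ t ∈ insert j S, u t * y t = u j * y j + ∑ t ∈ S, u t * y t :=
    Finset.sum_insert hjS
  have hinsu : ∑ t ∈ insert j S, u t = u j + ∑ t ∈ S, u t := Finset.sum_insert hjS
  set Sout := ∑ t ∈ Finset.univ \ insert j S, u t * y t with hSoutdef
  set SS := ∑ t ∈ S, u t * y t with hSSdef
  have hSout : 0 ≤ Sout :=
    Finset.sum_nonneg fun t _ => mul_nonneg (hu t) (hy t).1
  have hSSle : SS ≤ (∑ t ∈ S, u t) * y0 := by
    rw [Finset.sum_mul]
    exact Finset.sum_le_sum fun t _ => mul_le_mul_of_nonneg_left (hy t).2 (hu t)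
  have hSinle : ∑ t ∈ insert j S, u t * y t ≤ (∑ t ∈ insert j S, u t) * y0 := by
    rw [Finset.sum_mul]
    exact Finset.sum_le_sum fun t _ => mul_le_mul_of_nonneg_left (hy t).2 (hu t)
  constructor
  · have key : x - Sout ≤ U * y j := by
      rcases hx with h | h
      · subst h
        have : y j = 0 := by rw [hxy]; ring
        rw [this]; linarith
      · subst h
        have hyj : y j = y0 := by rw [hxy]; ring
        rw [hyj]
        nlinarith [hSinle]
    have := inv_mul_le_of_le' hU key
    rw [hrw]
    linarith [this]
  · have key : U * y j ≤ x + (U - u0 - u j) * y0 - SS := by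
      have hUsub : U - u0 - u j = ∑ t ∈ S, u t := by rw [hUdef, hinsu]; ring
      rcases hx with h | h
      · subst h
        have : y j = 0 := by rw [hxy]; ring
        rw [this, hUsub]
        nlinarith [hSSle]
      · subst h
        have hyj : y j = y0 := by rw [hxy]; ring
        rw [hyj, hUsub]
        have hUy0 : U * y0 = u0 * y0 + u j * y0 + (∑ t ∈ S, u t) * y0 := by
          rw [hUdef, hinsu]; ring
        have h1 : Sout + (u j * y0 + SS) = ∑ t, u t * y t := by
          rw [← hsplit, hins, hyj]
        linarith [hSout, hUy0, heq, h1]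
    have h2 := le_inv_mul_of_le' hU key
    rw [hrw]
    nlinarith [h2, hUinv]

lemma rhs_convex (n : ℕ) (u0 : ℝ) (u : Fin n → ℝ) (j : Fin n) :
    Convex ℝ {p : ℝ × ℝ × (Fin n → ℝ) |
        (0 ≤ p.1 ∧ p.1 ≤ 1) ∧
        (u0 * p.2.1 + ∑ t, u t * p.2.2 t = 1 ∧ ∀ t, 0 ≤ p.2.2 t ∧ p.2.2 t ≤ p.2.1) ∧
        ∀ S : Finset (Fin n), j ∉ S →
          ((u0 + ∑ t ∈ insert j S, u t)⁻¹ * p.1 -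
              ∑ t ∈ Finset.univ \ insert j S, u t * (u0 + ∑ s ∈ insert j S, u s)⁻¹ * p.2.2 t
            ≤ p.2.2 j) ∧
          (p.2.2 j ≤ (u0 + ∑ t ∈ insert j S, u t)⁻¹ * p.1 +
              (1 - (u0 + u j) * (u0 + ∑ t ∈ insert j S, u t)⁻¹) * p.2.1 -
              ∑ t ∈ S, u t * (u0 + ∑ s ∈ insert j S, u s)⁻¹ * p.2.2 t)} := by
  intro p hp q hq a b ha hb hab
  obtain ⟨⟨hp0, hp1⟩, ⟨hpeq, hpy⟩, hpS⟩ := hp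
  obtain ⟨⟨hq0, hq1⟩, ⟨hqeq, hqy⟩, hqS⟩ := hq
  have hlin : ∀ (T : Finset (Fin n)) (c : Fin n → ℝ),
      ∑ t ∈ T, c t * (a * p.2.2 t + b * q.2.2 t)
        = a * ∑ t ∈ T, c t * p.2.2 t + b * ∑ t ∈ T, c t * q.2.2 t := by
    intro T c
    rw [Finset.mul_sum, Finset.mul_sum, ← Finset.sum_add_distrib]
    exact Finset.sum_congr rfl fun t _ => by ring
  simp only [Set.mem_setOf_eq, Prod.fst_add, Prod.snd_add, Prod.smul_fst, Prod.smul_snd,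
    Pi.add_apply, Pi.smul_apply, smul_eq_mul]
  refine ⟨⟨?_, ?_⟩, ⟨?_, ?_⟩, ?_⟩
  · have := mul_nonneg ha hp0
    have := mul_nonneg hb hq0
    linarith
  · have := mul_le_mul_of_nonneg_left hp1 ha
    have := mul_le_mul_of_nonneg_left hq1 hb
    linarith
  · rw [hlin Finset.univ u]
    nlinarith [hpeq, hqeq]
  · intro t
    constructor
    · have := mul_nonneg ha (hpy t).1
      have := mul_nonneg hb (hqy t).1
      linarith
    · have := mul_le_mul_of_nonneg_left (hpy t).2 ha
      have := mul_le_mul_of_nonneg_left (hqy t).2 hb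
      linarith
  · intro S hjS
    have hpU := hpS S hjS
    have hqU := hqS S hjS
    constructor
    · rw [hlin (Finset.univ \ insert j S) (fun t => u t * (u0 + ∑ s ∈ insert j S, u s)⁻¹)]
      have h1 := mul_le_mul_of_nonneg_left hpU.1 ha
      have h2 := mul_le_mul_of_nonneg_left hqU.1 hb
      nlinarith [h1, h2]
    · rw [hlin S (fun t => u t * (u0 + ∑ s ∈ insert j S, u s)⁻¹)]
      have h1 := mul_le_mul_of_nonneg_left hpU.2 ha
      have h2 := mul_le_mul_of_nonneg_left hqU.2 hb
      nlinarith [h1, h2]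

lemma mul_le_of_inv_mul_le' {U A B : ℝ} (hU : 0 < U) (h : U⁻¹ * A ≤ B) : A ≤ U * B := by
  have := mul_le_mul_of_nonneg_left h hU.le
  rwa [← mul_assoc, mul_inv_cancel₀ hU.ne', one_mul] at this

lemma mul_le_of_le_inv_mul' {U A B : ℝ} (hU : 0 < U) (h : B ≤ U⁻¹ * A) : U * B ≤ A := by
  have := mul_le_mul_of_nonneg_left h hU.le
  rwa [← mul_assoc, mul_inv_cancel₀ hU.ne', one_mul] at this

lemma key_ineqs (n : ℕ) (u0 : ℝ) (hu0 : 0 < u0) (u : Fin n → ℝ) (hu : ∀ t, 0 ≤ u t)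
    (j : Fin n) (x y0 : ℝ) (y : Fin n → ℝ)
    (hS : ∀ S : Finset (Fin n), j ∉ S →
      ((u0 + ∑ t ∈ insert j S, u t)⁻¹ * x -
          ∑ t ∈ Finset.univ \ insert j S, u t * (u0 + ∑ s ∈ insert j S, u s)⁻¹ * y t ≤ y j) ∧
      (y j ≤ (u0 + ∑ t ∈ insert j S, u t)⁻¹ * x +
          (1 - (u0 + u j) * (u0 + ∑ t ∈ insert j S, u t)⁻¹) * y0 -
          ∑ t ∈ S, u t * (u0 + ∑ s ∈ insert j S, u s)⁻¹ * y t)) :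
    (∑ t ∈ Finset.univ \ {j}, u t * max (y t - (y0 - y j)) 0 ≤ x - (u0 + u j) * y j) ∧
    (x - (u0 + u j) * y j ≤ ∑ t ∈ Finset.univ \ {j}, u t * min (y t) (y j)) := by
  constructor
  · -- from Over with S = {t ≠ j : y0 - y j < y t}
    set S : Finset (Fin n) := (Finset.univ \ {j}).filter (fun t => y0 - y j < y t) with hSdef
    have hjS : j ∉ S := by simp [hSdef]
    have hSsub : S ⊆ Finset.univ \ {j} := Finset.filter_subset _ _
    set U : ℝ := u0 + ∑ t ∈ insert j S, u t with hUdef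
    have hA : (0:ℝ) ≤ ∑ t ∈ insert j S, u t := Finset.sum_nonneg fun t _ => hu t
    have hU : 0 < U := by linarith
    have hUinv : U * U⁻¹ = 1 := mul_inv_cancel₀ hU.ne'
    have hOver := (hS S hjS).2
    have hrw : ∑ t ∈ S, u t * U⁻¹ * y t = U⁻¹ * ∑ t ∈ S, u t * y t := by
      rw [Finset.mul_sum]; exact Finset.sum_congr rfl fun t _ => by ring
    rw [hrw] at hOver
    have hEq : U⁻¹ * x + (1 - (u0 + u j) * U⁻¹) * y0 - U⁻¹ * ∑ t ∈ S, u t * y t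
        = U⁻¹ * (x + (U - (u0 + u j)) * y0 - ∑ t ∈ S, u t * y t) := by
      linear_combination (-y0) * hUinv
    rw [hEq] at hOver
    have key := mul_le_of_le_inv_mul' hU hOver
    have hinsu : ∑ t ∈ insert j S, u t = u j + ∑ t ∈ S, u t := Finset.sum_insert hjS
    have hUyj : U * y j = (u0 + u j) * y j + (∑ t ∈ S, u t) * y j := by
      rw [hUdef, hinsu]; ring
    have hUk : U - (u0 + u j) = ∑ t ∈ S, u t := by rw [hUdef, hinsu]; ring
    rw [hUk] at key
    -- rewrite the max-sum
    have hmax : ∑ t ∈ Finset.univ \ {j}, u t * max (y t - (y0 - y j)) 0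
        = ∑ t ∈ S, u t * y t - (∑ t ∈ S, u t) * (y0 - y j) := by
      rw [← Finset.sum_sdiff hSsub]
      have h1 : ∑ t ∈ (Finset.univ \ {j}) \ S, u t * max (y t - (y0 - y j)) 0 = 0 := by
        apply Finset.sum_eq_zero
        intro t ht
        rw [Finset.mem_sdiff] at ht
        have hle : y t ≤ y0 - y j := by
          by_contra hcon
          exact ht.2 (Finset.mem_filter.2 ⟨ht.1, by linarith⟩)
        rw [max_eq_right (by linarith)]
        ring
      rw [h1, zero_add]
      rw [Finset.sum_mul, ← Finset.sum_sub_distrib]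
      apply Finset.sum_congr rfl
      intro t ht
      have := (Finset.mem_filter.1 ht).2
      rw [max_eq_left (by linarith)]
      ring
    rw [hmax]
    nlinarith [key, hUyj]
  · -- from Under with S = {t ≠ j : y j ≤ y t}
    set S : Finset (Fin n) := (Finset.univ \ {j}).filter (fun t => y j ≤ y t) with hSdef
    have hjS : j ∉ S := by simp [hSdef]
    have hSsub : S ⊆ Finset.univ \ {j} := Finset.filter_subset _ _
    set U : ℝ := u0 + ∑ t ∈ insert j S, u t with hUdef
    have hA : (0:ℝ) ≤ ∑ t ∈ insert j S, u t := Finset.sum_nonneg fun t _ => hu t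
    have hU : 0 < U := by linarith
    have hUnder := (hS S hjS).1
    have hout : Finset.univ \ insert j S = (Finset.univ \ {j}) \ S := by
      ext t
      simp only [Finset.mem_sdiff, Finset.mem_insert, Finset.mem_univ, true_and,
        Finset.mem_singleton]
      tauto
    have hrw : ∑ t ∈ Finset.univ \ insert j S, u t * U⁻¹ * y t
        = U⁻¹ * ∑ t ∈ (Finset.univ \ {j}) \ S, u t * y t := by
      rw [hout, Finset.mul_sum]; exact Finset.sum_congr rfl fun t _ => by ring
    rw [hrw] at hUnder
    have hUnder' : U⁻¹ * (x - ∑ t ∈ (Finset.univ \ {j}) \ S, u t * y t) ≤ y j := by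
      rw [mul_sub]; linarith
    have key := mul_le_of_inv_mul_le' hU hUnder'
    have hinsu : ∑ t ∈ insert j S, u t = u j + ∑ t ∈ S, u t := Finset.sum_insert hjS
    have hUyj : U * y j = (u0 + u j) * y j + (∑ t ∈ S, u t) * y j := by
      rw [hUdef, hinsu]; ring
    have hmin : ∑ t ∈ Finset.univ \ {j}, u t * min (y t) (y j)
        = ∑ t ∈ (Finset.univ \ {j}) \ S, u t * y t + (∑ t ∈ S, u t) * y j := by
      rw [← Finset.sum_sdiff hSsub]
      congr 1
      · apply Finset.sum_congr rfl
        intro t ht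
        rw [Finset.mem_sdiff] at ht
        have hlt : y t ≤ y j := by
          by_contra hcon
          exact ht.2 (Finset.mem_filter.2 ⟨ht.1, by linarith⟩)
        rw [min_eq_left hlt]
      · rw [Finset.sum_mul]
        apply Finset.sum_congr rfl
        intro t ht
        have := (Finset.mem_filter.1 ht).2
        rw [min_eq_right this]
    rw [hmin]
    linarith [key, hUyj]

lemma comb_le' {θ A B C : ℝ} (h0 : 0 ≤ θ) (h1 : θ ≤ 1) (hA : A ≤ C) (hB : B ≤ C) :
    (1-θ)*A + θ*B ≤ C := by nlinarith

lemma le_comb' {θ A B C : ℝ} (h0 : 0 ≤ θ) (h1 : θ ≤ 1) (hA : C ≤ A) (hB : C ≤ B) :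
    C ≤ (1-θ)*A + θ*B := by nlinarith

lemma decomp (n : ℕ) (u0 : ℝ) (hu0 : 0 < u0) (u : Fin n → ℝ) (hu : ∀ t, 0 ≤ u t)
    (j : Fin n) (x y0 : ℝ) (y : Fin n → ℝ)
    (hx0 : 0 < x) (hx1 : x < 1)
    (heq : u0 * y0 + ∑ t, u t * y t = 1)
    (hy : ∀ t, 0 ≤ y t ∧ y t ≤ y0)
    (hover : ∑ t ∈ Finset.univ \ {j}, u t * max (y t - (y0 - y j)) 0 ≤ x - (u0 + u j) * y j)
    (hunder : x - (u0 + u j) * y j ≤ ∑ t ∈ Finset.univ \ {j}, u t * min (y t) (y j)) :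
    ∃ A B : ℝ × ℝ × (Fin n → ℝ),
      ((A.1 = 0 ∨ A.1 = 1) ∧
        (u0 * A.2.1 + ∑ t, u t * A.2.2 t = 1 ∧ ∀ t, 0 ≤ A.2.2 t ∧ A.2.2 t ≤ A.2.1) ∧
        A.2.2 j = A.2.1 * A.1) ∧
      ((B.1 = 0 ∨ B.1 = 1) ∧
        (u0 * B.2.1 + ∑ t, u t * B.2.2 t = 1 ∧ ∀ t, 0 ≤ B.2.2 t ∧ B.2.2 t ≤ B.2.1) ∧
        B.2.2 j = B.2.1 * B.1) ∧
      x • A + (1 - x) • B = (x, y0, y) := by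
  have h1x : 0 < 1 - x := by linarith
  have hyj0 : 0 ≤ y j := (hy j).1
  have hc : 0 ≤ y0 - y j := by linarith [(hy j).2]
  set SL := ∑ t ∈ Finset.univ \ {j}, u t * max (y t - (y0 - y j)) 0 with hSL
  set SM := ∑ t ∈ Finset.univ \ {j}, u t * min (y t) (y j) with hSM
  set Tx := x - (u0 + u j) * y j with hTx
  have hSMSL : SL ≤ SM := by
    apply Finset.sum_le_sum
    intro t _
    apply mul_le_mul_of_nonneg_left _ (hu t)
    exact max_le (le_min (by linarith [(hy t).1]) (by linarith [(hy t).2]))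
      (le_min (hy t).1 hyj0)
  obtain ⟨θ, hθ0, hθ1, hθT⟩ : ∃ θ : ℝ, 0 ≤ θ ∧ θ ≤ 1 ∧ (1-θ)*SL + θ*SM = Tx := by
    by_cases h : SM - SL = 0
    · exact ⟨0, le_refl _, zero_le_one, by linarith⟩
    · have hpos : 0 < SM - SL := lt_of_le_of_ne (by linarith) (Ne.symm h)
      refine ⟨(Tx - SL)/(SM - SL), div_nonneg (by linarith) hpos.le,
        (div_le_one hpos).2 (by linarith), ?_⟩
      field_simp
      ring
  set g : Fin n → ℝ := fun t => (1-θ) * max (y t - (y0 - y j)) 0 + θ * min (y t) (y j) with hg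
  set aa : Fin n → ℝ := fun t => if t = j then y j / x else g t / x with haa
  set bb : Fin n → ℝ := fun t => (y t - x * aa t) / (1 - x) with hbb
  -- pointwise facts about g
  have hg0 : ∀ t, 0 ≤ g t := fun t =>
    add_nonneg (mul_nonneg (by linarith) (le_max_right _ _))
      (mul_nonneg hθ0 (le_min (hy t).1 hyj0))
  have hgyj : ∀ t, g t ≤ y j := fun t =>
    comb_le' hθ0 hθ1 (max_le (by linarith [(hy t).2]) hyj0) (min_le_right _ _)
  have hgyt : ∀ t, g t ≤ y t := fun t =>
    comb_le' hθ0 hθ1 (max_le (by linarith) (hy t).1) (min_le_left _ _)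
  have hglow : ∀ t, y t - (y0 - y j) ≤ g t := fun t =>
    le_comb' hθ0 hθ1 (le_max_left _ _) (le_min (by linarith) (by linarith [(hy t).2]))
  -- x * aa facts
  have hxaaj : x * aa j = y j := by
    simp only [haa, if_pos rfl]
    rw [mul_comm, div_mul_cancel₀ _ hx0.ne']
  have hxaat : ∀ t, t ≠ j → x * aa t = g t := by
    intro t ht
    simp only [haa, if_neg ht]
    rw [mul_comm, div_mul_cancel₀ _ hx0.ne']
  -- sum over univ \ {j} of u * g equals Tx
  have hgsum : ∑ t ∈ Finset.univ \ {j}, u t * g t = Tx := by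
    have h1 : ∑ t ∈ Finset.univ \ {j}, u t * g t = (1-θ)*SL + θ*SM := by
      rw [hSL, hSM, Finset.mul_sum, Finset.mul_sum, ← Finset.sum_add_distrib]
      exact Finset.sum_congr rfl fun t _ => by rw [hg]; ring
    rw [h1, hθT]
  -- x * (sum over univ of u * aa)
  have hxsum : x * ∑ t, u t * aa t = Tx + u j * y j := by
    rw [Finset.mul_sum]
    rw [Finset.sum_eq_sum_sdiff_singleton_add (Finset.mem_univ j) (fun t => x * (u t * aa t))]
    have h1 : ∑ t ∈ Finset.univ \ {j}, x * (u t * aa t)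
        = ∑ t ∈ Finset.univ \ {j}, u t * g t := by
      apply Finset.sum_congr rfl
      intro t ht
      have htj : t ≠ j := by
        rw [Finset.mem_sdiff, Finset.mem_singleton] at ht
        exact ht.2
      rw [← hxaat t htj]; ring
    rw [h1, hgsum]
    have : x * (u j * aa j) = u j * y j := by rw [← hxaaj]; ring
    rw [this]
  have hsum_aa : u0 * (y j / x) + ∑ t, u t * aa t = 1 := by
    have h2 : x * (u0 * (y j / x) + ∑ t, u t * aa t) = x * 1 := by
      rw [mul_add, hxsum, mul_one]
      have : x * (u0 * (y j / x)) = u0 * (x * (y j / x)) := by ring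
      rw [this, mul_div_cancel₀ _ hx0.ne', hTx]
      ring
    exact mul_left_cancel₀ hx0.ne' h2
  have hsum_bb : u0 * ((y0 - y j) / (1 - x)) + ∑ t, u t * bb t = 1 := by
    have h2 : (1-x) * (u0 * ((y0 - y j) / (1 - x)) + ∑ t, u t * bb t) = (1-x) * 1 := by
      rw [mul_add]
      have e1 : (1-x) * (u0 * ((y0 - y j) / (1 - x))) = u0 * (y0 - y j) := by
        rw [show (1-x) * (u0 * ((y0 - y j) / (1 - x))) = u0 * ((y0 - y j)/(1-x)*(1-x)) by ring,
          div_mul_cancel₀ _ h1x.ne']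
      have e2 : (1-x) * ∑ t, u t * bb t = ∑ t, u t * y t - x * ∑ t, u t * aa t := by
        rw [Finset.mul_sum]
        have : ∀ t ∈ Finset.univ, (1-x) * (u t * bb t) = u t * y t - x * (u t * aa t) := by
          intro t _
          rw [hbb]
          simp only
          rw [show (1-x) * (u t * ((y t - x * aa t)/(1-x)))
            = u t * ((y t - x * aa t)/(1-x)*(1-x)) by ring, div_mul_cancel₀ _ h1x.ne']
          ring
        rw [Finset.sum_congr rfl this, Finset.sum_sub_distrib, ← Finset.mul_sum]
      rw [e1, e2, hxsum, hTx]
      linarith [heq]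
    exact mul_left_cancel₀ h1x.ne' h2
  refine ⟨((1:ℝ), y j / x, aa), ((0:ℝ), (y0 - y j)/(1-x), bb), ⟨Or.inr rfl, ⟨hsum_aa, ?_⟩, ?_⟩,
    ⟨Or.inl rfl, ⟨hsum_bb, ?_⟩, ?_⟩, ?_⟩
  · -- bounds for aa
    intro t
    by_cases ht : t = j
    · subst ht
      simp only [haa, if_pos rfl]
      exact ⟨div_nonneg hyj0 hx0.le, le_refl _⟩
    · simp only [haa, if_neg ht]
      constructor
      · exact div_nonneg (hg0 t) hx0.le
      · exact div_le_div_of_nonneg_right (hgyj t) hx0.le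
  · -- aa j = (y j / x) * 1
    simp only [haa, if_pos rfl]
    ring
  · -- bounds for bb
    intro t
    simp only [hbb]
    by_cases ht : t = j
    · subst ht
      rw [hxaaj]
      simp only [sub_self, zero_div]
      exact ⟨le_refl _, div_nonneg hc h1x.le⟩
    · rw [hxaat t ht]
      constructor
      · exact div_nonneg (by linarith [hgyt t]) h1x.le
      · exact div_le_div_of_nonneg_right (by linarith [hglow t]) h1x.le
  · -- bb j = b0 * 0
    simp only [hbb, hxaaj, sub_self, zero_div, mul_zero]
  · -- the convex combination equation
    have hsnd : x * (y j / x) + (1-x) * ((y0 - y j)/(1-x)) = y0 := by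
      rw [mul_comm x, div_mul_cancel₀ _ hx0.ne', mul_comm (1-x), div_mul_cancel₀ _ h1x.ne']
      ring
    have hthird : ∀ t, x * aa t + (1-x) * bb t = y t := by
      intro t
      rw [hbb]
      simp only
      rw [mul_comm (1-x), div_mul_cancel₀ _ h1x.ne']
      ring
    simp only [Prod.smul_mk, Prod.mk_add_mk, smul_eq_mul, Prod.mk.injEq]
    refine ⟨by ring, hsnd, ?_⟩
    funext t
    simpa using hthird t


/-- The `Under(j,S)` and `Over(j,S)` inequalities together describe `conv(B_j)`. -/
theorem stmt15 (n : ℕ) (hn : 1 ≤ n) (u0 : ℝ) (hu0 : 0 < u0)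
    (u : Fin n → ℝ) (hu : ∀ t, 0 ≤ u t) (j : Fin n) :
    convexHull ℝ {p : ℝ × ℝ × (Fin n → ℝ) |
        (p.1 = 0 ∨ p.1 = 1) ∧
        (u0 * p.2.1 + ∑ t, u t * p.2.2 t = 1 ∧ ∀ t, 0 ≤ p.2.2 t ∧ p.2.2 t ≤ p.2.1) ∧
        p.2.2 j = p.2.1 * p.1} =
      {p : ℝ × ℝ × (Fin n → ℝ) |
        (0 ≤ p.1 ∧ p.1 ≤ 1) ∧
        (u0 * p.2.1 + ∑ t, u t * p.2.2 t = 1 ∧ ∀ t, 0 ≤ p.2.2 t ∧ p.2.2 t ≤ p.2.1) ∧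
        ∀ S : Finset (Fin n), j ∉ S →
          ((u0 + ∑ t ∈ insert j S, u t)⁻¹ * p.1 -
              ∑ t ∈ Finset.univ \ insert j S, u t * (u0 + ∑ s ∈ insert j S, u s)⁻¹ * p.2.2 t
            ≤ p.2.2 j) ∧
          (p.2.2 j ≤ (u0 + ∑ t ∈ insert j S, u t)⁻¹ * p.1 +
              (1 - (u0 + u j) * (u0 + ∑ t ∈ insert j S, u t)⁻¹) * p.2.1 -
              ∑ t ∈ S, u t * (u0 + ∑ s ∈ insert j S, u s)⁻¹ * p.2.2 t)} := by
  apply Set.Subset.antisymm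
  · apply convexHull_min
    · intro p hp
      obtain ⟨hx01, ⟨heq, hy⟩, hxy⟩ := hp
      refine ⟨?_, ⟨heq, hy⟩,
        fun S hjS => bj_ineqs n u0 hu0 u hu j p.1 p.2.1 p.2.2 hx01 heq hy hxy S hjS⟩
      rcases hx01 with h | h <;> rw [h] <;> norm_num
    · exact rhs_convex n u0 u j
  · intro p hp
    obtain ⟨⟨hx0, hx1⟩, ⟨heq, hy⟩, hS⟩ := hp
    have hU0 : (0:ℝ) < u0 + u j := by linarith [hu j]
    rcases eq_or_lt_of_le hx0 with h0 | h0
    · -- p.1 = 0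
      apply subset_convexHull
      have hOver := (hS ∅ (Finset.notMem_empty j)).2
      simp only [Finset.sum_insert (Finset.notMem_empty j), Finset.sum_empty, add_zero,
        ← h0, mul_zero, zero_add, mul_inv_cancel₀ hU0.ne', sub_self, zero_mul, sub_zero,
        zero_add] at hOver
      have hj0 : p.2.2 j = 0 := le_antisymm hOver (hy j).1
      exact ⟨Or.inl h0.symm, ⟨heq, hy⟩, by rw [hj0, ← h0, mul_zero]⟩
    rcases eq_or_lt_of_le hx1 with h1 | h1
    · -- p.1 = 1
      apply subset_convexHull
      have hUnder := (hS ∅ (Finset.notMem_empty j)).1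
      simp only [Finset.sum_insert (Finset.notMem_empty j), Finset.sum_empty, add_zero,
        h1, mul_one] at hUnder
      have hins : (insert j (∅ : Finset (Fin n))) = {j} := rfl
      rw [hins] at hUnder
      have hrw : ∑ t ∈ Finset.univ \ {j}, u t * (u0 + u j)⁻¹ * p.2.2 t
          = (u0 + u j)⁻¹ * ∑ t ∈ Finset.univ \ {j}, u t * p.2.2 t := by
        rw [Finset.mul_sum]; exact Finset.sum_congr rfl fun t _ => by ring
      rw [hrw] at hUnder
      have hUnder' : (u0 + u j)⁻¹ * (1 - ∑ t ∈ Finset.univ \ {j}, u t * p.2.2 t) ≤ p.2.2 j := by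
        rw [mul_sub, mul_one]; linarith
      have key := mul_le_of_inv_mul_le' hU0 hUnder'
      have hsplit : ∑ t, u t * p.2.2 t
          = ∑ t ∈ Finset.univ \ {j}, u t * p.2.2 t + u j * p.2.2 j :=
        Finset.sum_eq_sum_sdiff_singleton_add (Finset.mem_univ j) _
      have hjy0 : p.2.2 j = p.2.1 := by nlinarith [key, heq, hsplit, (hy j).2]
      exact ⟨Or.inr h1, ⟨heq, hy⟩, by rw [hjy0, h1, mul_one]⟩
    · -- 0 < p.1 < 1
      have hkey := key_ineqs n u0 hu0 u hu j p.1 p.2.1 p.2.2 hS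
      obtain ⟨A, B, hA, hB, hsum⟩ := decomp n u0 hu0 u hu j p.1 p.2.1 p.2.2 h0 h1 heq hy
        hkey.1 hkey.2
      have hsum' : p.1 • A + (1 - p.1) • B = p := hsum
      rw [← hsum']
      refine (convex_convexHull ℝ _) ?_ ?_ h0.le (by linarith) (by ring)
      · exact subset_convexHull ℝ _ hA
      · exact subset_convexHull ℝ _ hB
end

section
/- Let (y₀, y) ∈ Y and let σ be a permutation of N such that y_{σ(1)} ≥ y_{σ(2)} ≥ … ≥ y_{σ(n)}. Set S_0 := ∅ and S_k := {σ(1),…,σ(k)} for 1 ≤ k ≤ n, and define λ_0 := U(∅)·(y₀ − y_{σ(1)}), λ_k := U(S_k)·(y_{σ(k)} − y_{σ(k+1)}) for 1 ≤ k ≤ n−1, and λ_n := U(N)·y_{σ(n)}. Then λ_k ≥ 0 for all 0 ≤ k ≤ n, Σ_{k=0}^{n} λ_k = 1, and (y₀, y) = Σ_{k=0}^{n} λ_k · ext(S_k); that is, every point of Y is a convex combination of the nested-assortment vertices ext(S_0), ext(S_1), …, ext(S_n). -/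
private lemma abel_sum (f g : ℕ → ℝ) (n : ℕ) :
    ∑ k ∈ Finset.range (n + 1), f k * (g k - g (k + 1)) =
      f 0 * g 0 - f n * g (n + 1) +
        ∑ k ∈ Finset.range n, (f (k + 1) - f k) * g (k + 1) := by
  induction n with
  | zero => simp; ring
  | succ m ih =>
    rw [Finset.sum_range_succ, ih, Finset.sum_range_succ]
    ring

/-- Every point of the polytope `Y` is a convex combination of the nested-assortment
vertices `ext(S_0), ext(S_1), …, ext(S_n)` with the choice-probability-ordered
multipliers `λ_k`. -/
theorem stmt16 (n : ℕ) (hn : 1 ≤ n) (u0 : ℝ) (hu0 : 0 < u0)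
    (u : Fin n → ℝ) (hu : ∀ t, 0 ≤ u t)
    (y0 : ℝ) (y : Fin n → ℝ)
    (hnorm : u0 * y0 + ∑ t, u t * y t = 1)
    (hbd : ∀ t, 0 ≤ y t ∧ y t ≤ y0)
    (σ : Equiv.Perm (Fin n))
    (hσ : ∀ k l : Fin n, k ≤ l → y (σ l) ≤ y (σ k))
    (S : ℕ → Finset (Fin n))
    (hS : ∀ k, S k = (Finset.univ.filter fun l : Fin n => (l : ℕ) < k).image σ)
    (ybar : ℕ → ℝ)
    (hybar0 : ybar 0 = y0)
    (hybar : ∀ l : Fin n, ybar ((l : ℕ) + 1) = y (σ l))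
    (hybarn : ybar (n + 1) = 0)
    (lam : ℕ → ℝ)
    (hlam : ∀ k, k ≤ n → lam k = (u0 + ∑ t ∈ S k, u t) * (ybar k - ybar (k + 1)))
    (extPt : Finset (Fin n) → ℝ × (Fin n → ℝ))
    (hext : ∀ T : Finset (Fin n), extPt T =
      ((u0 + ∑ t ∈ T, u t)⁻¹, fun t => if t ∈ T then (u0 + ∑ s ∈ T, u s)⁻¹ else 0)) :
    (∀ k, k ≤ n → 0 ≤ lam k) ∧
    (∑ k ∈ Finset.range (n + 1), lam k = 1) ∧
    ((y0, y) = ∑ k ∈ Finset.range (n + 1), lam k • extPt (S k)) := by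
  set U : ℕ → ℝ := fun k => u0 + ∑ t ∈ S k, u t with hU
  have hUpos : ∀ k, 0 < U k := fun k =>
    add_pos_of_pos_of_nonneg hu0 (Finset.sum_nonneg fun t _ => hu t)
  have hmem : ∀ (t : Fin n) (k : ℕ), t ∈ S k ↔ (σ.symm t : ℕ) < k := by
    intro t k
    rw [hS]
    simp only [Finset.mem_image, Finset.mem_filter, Finset.mem_univ, true_and]
    constructor
    · rintro ⟨l, hl, rfl⟩
      simpa using hl
    · intro h
      exact ⟨σ.symm t, h, σ.apply_symm_apply t⟩
  have hS0 : S 0 = ∅ := by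
    ext t; simp [hmem]
  have hSsucc : ∀ (k : ℕ) (hk : k < n), S (k + 1) = insert (σ ⟨k, hk⟩) (S k) := by
    intro k hk
    ext t
    simp only [Finset.mem_insert, hmem]
    constructor
    · intro h
      rcases Nat.lt_succ_iff_lt_or_eq.mp h with h | h
      · exact Or.inr h
      · left
        have h2 : σ.symm t = ⟨k, hk⟩ := Fin.ext h
        rw [← h2, Equiv.apply_symm_apply]
    · rintro (rfl | h)
      · simp
      · omega
  have hnotmem : ∀ (k : ℕ) (hk : k < n), σ ⟨k, hk⟩ ∉ S k := by
    intro k hk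
    rw [hmem]
    simp
  have hUsucc : ∀ (k : ℕ) (hk : k < n), U (k + 1) = U k + u (σ ⟨k, hk⟩) := by
    intro k hk
    simp only [hU, hSsucc k hk, Finset.sum_insert (hnotmem k hk)]
    ring
  -- ybar values
  have hybar' : ∀ (k : ℕ) (hk : k < n), ybar (k + 1) = y (σ ⟨k, hk⟩) := by
    intro k hk
    exact hybar ⟨k, hk⟩
  have hmono : ∀ k, k ≤ n → ybar (k + 1) ≤ ybar k := by
    intro k hk
    rcases Nat.eq_zero_or_pos k with rfl | hk0
    · rw [hybar0, hybar' 0 hn]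
      exact (hbd _).2
    · obtain ⟨m, rfl⟩ := Nat.exists_eq_add_of_lt hk0
      simp only [Nat.zero_add] at *
      have hmn : m < n := by omega
      rw [hybar' m hmn]
      rcases Nat.lt_or_ge (m + 1) n with h | h
      · rw [hybar' (m + 1) h]
        exact hσ ⟨m, hmn⟩ ⟨m + 1, h⟩ (by simp)
      · have : m + 1 = n := by omega
        rw [this, hybarn]
        exact (hbd _).1
  have hlam_nonneg : ∀ k, k ≤ n → 0 ≤ lam k := by
    intro k hk
    rw [hlam k hk]
    exact mul_nonneg (hUpos k).le (sub_nonneg.2 (hmono k hk))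
  refine ⟨hlam_nonneg, ?_, ?_⟩
  · -- sum of lam = 1
    have h1 : ∑ k ∈ Finset.range (n + 1), lam k =
        ∑ k ∈ Finset.range (n + 1), U k * (ybar k - ybar (k + 1)) := by
      refine Finset.sum_congr rfl fun k hk => ?_
      rw [hlam k (Nat.lt_succ_iff.mp (Finset.mem_range.mp hk))]
    rw [h1, abel_sum U ybar n, hybarn, hybar0]
    have hU0 : U 0 = u0 := by simp [hU, hS0]
    have h2 : ∑ k ∈ Finset.range n, (U (k + 1) - U k) * ybar (k + 1) =
        ∑ t, u t * y t := by
      rw [← Fin.sum_univ_eq_sum_range (fun k => (U (k + 1) - U k) * ybar (k + 1)) n]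
      rw [← Equiv.sum_comp σ (fun t => u t * y t)]
      refine Finset.sum_congr rfl fun i _ => ?_
      rw [hUsucc i i.isLt, hybar' i i.isLt]
      ring
    rw [hU0, h2]
    linarith [hnorm]
  · -- convex combination
    have hkey : ∀ k, k ≤ n → lam k * (U k)⁻¹ = ybar k - ybar (k + 1) := by
      intro k hk
      rw [hlam k hk, mul_comm (U k), mul_assoc, mul_inv_cancel₀ (hUpos k).ne', mul_one]
    have htel : ∑ k ∈ Finset.range (n + 1), (ybar k - ybar (k + 1)) =
        ybar 0 - ybar (n + 1) := Finset.sum_range_sub' ybar (n + 1)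
    refine Prod.ext ?_ ?_
    · rw [Prod.fst_sum]
      have : ∀ k ∈ Finset.range (n + 1), (lam k • extPt (S k)).1 = ybar k - ybar (k + 1) := by
        intro k hk
        rw [hext, Prod.smul_fst]
        exact hkey k (Nat.lt_succ_iff.mp (Finset.mem_range.mp hk))
      rw [Finset.sum_congr rfl this, htel, hybarn, hybar0]
      simp
    · funext t
      rw [Prod.snd_sum, Finset.sum_apply]
      set m : ℕ := (σ.symm t : ℕ) with hm
      have hmn : m < n := (σ.symm t).isLt
      have hterm : ∀ k ∈ Finset.range (n + 1),
          (lam k • extPt (S k)).2 t = if m < k then ybar k - ybar (k + 1) else 0 := by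
        intro k hk
        simp only [hext, Prod.smul_snd, Pi.smul_apply, smul_eq_mul, hmem, ← hm]
        split
        · exact hkey k (Nat.lt_succ_iff.mp (Finset.mem_range.mp hk))
        · ring
      rw [Finset.sum_congr rfl hterm, ← Finset.sum_filter]
      have hfilt : (Finset.range (n + 1)).filter (fun k => m < k) =
          Finset.Ico (m + 1) (n + 1) := by
        ext k
        simp only [Finset.mem_filter, Finset.mem_range, Finset.mem_Ico]
        omega
      rw [hfilt, Finset.sum_Ico_eq_sub _ (by omega : m + 1 ≤ n + 1)]
      rw [Finset.sum_range_sub' ybar (n + 1), Finset.sum_range_sub' ybar (m + 1)]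
      rw [hybarn]
      have : ybar (m + 1) = y t := by
        rw [hm, hybar (σ.symm t), Equiv.apply_symm_apply]
      simp [this]
end

section
/- Suppose α_i ≥ 0 for all i ∈ M⁺, r_{ij} ≥ 0 for all i ∈ M⁺ and j ∈ N, u₀ > 0, u_j ≥ 0 for all j ∈ N, and θ_{ij} > 0 for all i ∈ M and j ∈ N, and let E ⊆ N × N. Then the optimal value of (QAP-IDM) equals the optimal value of (QAP-IDM-LP): sup{ α_0·(Σ_{j∈N} r_{0j}u_j x_{0j})/(u₀ + Σ_{j∈N} u_j x_{0j}) + Σ_{i∈M} α_i·Σ_{j∈N} r_{ij}θ_{ij}x_{ij} : x_i ∈ {0,1}ⁿ for all i ∈ M⁺, x_0 ≥ x_i componentwise for all i ∈ M, and x_{0j} ≥ x_{0k} for all (j,k) ∈ E } = sup{ α_0·Σ_{j∈N} r_{0j}u_j y_j + Σ_{i∈M} α_i·Σ_{j∈N} r_{ij}θ_{ij}x_j : (x, y₀, y) ∈ ℝⁿ×ℝ×ℝⁿ with u₀y₀ + Σ_{j∈N} u_j y_j = 1, 0 ≤ y_j ≤ y₀ for all j ∈ N, y_j ≥ y_k for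 all (j,k) ∈ E, and Under(j,S) holds (with x_j in place of the binary variable) for every j ∈ N and every S ⊆ N\{j} }. -/
/-!
A 0/1 solution with offline assortment `S` is dominated by the LP point `x = 1_S`,
`y = 1_S / U(S)`, which satisfies every `Under` inequality because `x ∈ [0,1]ⁿ`; raising each
online assortment to `S` only increases the online revenue.

Conversely, an LP point `(x, y₀, y)` is a layer-cake combination
`∑_w d_w U(T_w) (1_{T_w} / U(T_w))` of normalized indicators of its superlevel sets
`T_w = {t | w ≤ y_t}`. The weights `d_w U(T_w)` sum to `1`, each `T_w` respects the precedence
constraints, and `Under(j, T_{y_j} \ {j})` bounds `x_j` by the total weight of the layers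
containing `j`. Hence the LP objective is at most a convex combination of the values of feasible
assortments.
-/

open Finset

theorem Finset.exists_layer_weights (L : Finset ℝ) (hL : ∀ v ∈ L, 0 ≤ v) :
    ∃ d : ℝ → ℝ, (∀ v ∈ L, 0 ≤ d v) ∧ ∀ v ∈ L, ∑ w ∈ L with w ≤ v, d w = v := by
  -- `d w` is the gap between `w` and its predecessor in `L ∪ {0}`
  induction L using Finset.induction_on_max with
  | empty => exact ⟨0, by simp, by simp⟩
  | insert a s hlt ih =>
    obtain ⟨d, hd0, hd⟩ := ih fun v hv => hL v (mem_insert_of_mem hv)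
    have has : a ∉ s := fun h => lt_irrefl a (hlt a h)
    have hsum_le : ∑ w ∈ s, d w ≤ a := by
      rcases s.eq_empty_or_nonempty with rfl | hs
      · simpa using hL a (mem_insert_self a ∅)
      · have htop := hd _ (s.max'_mem hs)
        rw [filter_true_of_mem fun w hw => s.le_max' w hw] at htop
        exact htop ▸ (hlt _ (s.max'_mem hs)).le
    set d' := Function.update d a (a - ∑ w ∈ s, d w)
    have hd's : ∀ w ∈ s, d' w = d w := fun w hw =>
      Function.update_of_ne (ne_of_mem_of_not_mem hw has) _ _
    refine ⟨d', fun v hv => ?_, fun v hv => ?_⟩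
    · rcases mem_insert.1 hv with rfl | hv
      · simpa [d'] using hsum_le
      · exact hd's v hv ▸ hd0 v hv
    · rcases mem_insert.1 hv with rfl | hv
      · rw [filter_true_of_mem fun w hw => ?_, sum_insert has, sum_congr rfl hd's]
        · simp [d']
        · rcases mem_insert.1 hw with rfl | hw
          exacts [le_rfl, (hlt w hw).le]
      · rw [filter_insert, if_neg (not_le.2 (hlt v hv)),
          sum_congr rfl fun w hw => hd's w (mem_filter.1 hw).1, hd v hv]

variable {ι : Type*} [Fintype ι]

theorem Finset.sum_mul_sum_superlevel (L : Finset ℝ) (e : ℝ → ℝ) (y a : ι → ℝ) :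
    ∑ w ∈ L, e w * ∑ t with w ≤ y t, a t = ∑ t, a t * ∑ w ∈ L with w ≤ y t, e w := by
  simp_rw [mul_sum, sum_filter]
  rw [sum_comm]
  simp [mul_comm]

theorem lp_objective_le_of_forall_closed {u0 : ℝ} (hu0 : 0 < u0) {u : ι → ℝ}
    (hu : ∀ j, 0 ≤ u j) (a c : ι → ℝ) (hc : ∀ j, 0 ≤ c j) (E : Set (ι × ι)) {M : ℝ}
    (hM : ∀ S : Finset ι, (∀ e ∈ E, e.2 ∈ S → e.1 ∈ S) →
      (∑ j ∈ S, a j) / (u0 + ∑ j ∈ S, u j) + ∑ j ∈ S, c j ≤ M)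
    {x : ι → ℝ} {y0 : ℝ} {y : ι → ℝ} (hsum : u0 * y0 + ∑ j, u j * y j = 1)
    (hy : ∀ j, 0 ≤ y j ∧ y j ≤ y0) (hE : ∀ e ∈ E, y e.2 ≤ y e.1)
    (hx : ∀ j, x j ≤ u0 * y j + ∑ t, u t * min (y j) (y t)) :
    ∑ j, a j * y j + ∑ j, c j * x j ≤ M := by
  have hy0 : 0 ≤ y0 := by
    rcases isEmpty_or_nonempty ι with hι | ⟨⟨j⟩⟩
    · simp only [univ_eq_empty, sum_empty, add_zero] at hsum
      exact (eq_inv_of_mul_eq_one_right hsum).symm ▸ (inv_pos.2 hu0).le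
    · exact (hy j).1.trans (hy j).2
  set L := insert y0 (univ.image y)
  obtain ⟨d, hd0, hd⟩ := L.exists_layer_weights <| by
    simpa [L, hy0] using fun j => (hy j).1
  have hlev : ∀ t, ∑ w ∈ L with w ≤ y t, d w = y t := fun t => hd _ (by simp [L])
  have htot : ∑ w ∈ L, d w = y0 := by
    rw [← hd y0 (mem_insert_self _ _), filter_true_of_mem]
    simpa [L] using fun t => (hy t).2
  set U : ℝ → ℝ := fun w => u0 + ∑ t with w ≤ y t, u t
  have hU : ∀ w, 0 < U w := fun w => add_pos_of_pos_of_nonneg hu0 (sum_nonneg fun t _ => hu t)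
  have hmass : ∑ w ∈ L, d w * U w = 1 := by
    simp only [U, mul_add, sum_add_distrib, ← sum_mul, htot, sum_mul_sum_superlevel, hlev]
    linarith
  have hxU : ∀ j, x j ≤ ∑ w ∈ L with w ≤ y j, d w * U w := by
    intro j
    refine (hx j).trans_eq ?_
    simp only [U, mul_add, sum_add_distrib, ← sum_mul, hlev, sum_mul_sum_superlevel, filter_filter,
      ← le_min_iff]
    congr 1
    · ring
    · refine sum_congr rfl fun t _ => ?_
      rcases min_choice (y j) (y t) with h | h <;> rw [h, hlev]
  have hon : ∑ j, c j * x j ≤ ∑ w ∈ L, d w * U w * ∑ t with w ≤ y t, c t := by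
    rw [sum_mul_sum_superlevel]
    exact sum_le_sum fun j _ => mul_le_mul_of_nonneg_left (hxU j) (hc j)
  have hclosed : ∀ w, ∀ e ∈ E, e.2 ∈ univ.filter (w ≤ y ·) → e.1 ∈ univ.filter (w ≤ y ·) := by
    intro w e he h
    simp only [mem_filter, mem_univ, true_and] at h ⊢
    exact h.trans (hE e he)
  calc ∑ j, a j * y j + ∑ j, c j * x j
      ≤ ∑ w ∈ L, d w * U w * ((∑ t with w ≤ y t, a t) / U w + ∑ t with w ≤ y t, c t) := by
        have hoff : ∑ j, a j * y j = ∑ w ∈ L, d w * ∑ t with w ≤ y t, a t := by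
          simp only [sum_mul_sum_superlevel, hlev]
        refine (add_le_add_right hon _).trans_eq ?_
        rw [hoff, ← sum_add_distrib]
        refine sum_congr rfl fun w _ => ?_
        field_simp [(hU w).ne']
    _ ≤ ∑ w ∈ L, d w * U w * M :=
        sum_le_sum fun w hw => mul_le_mul_of_nonneg_left (hM _ (hclosed w))
          (mul_nonneg (hd0 w hw) (hU w).le)
    _ = M := by rw [← sum_mul, hmass, one_mul]

variable [DecidableEq ι]

theorem inv_mul_sub_sum_le_iff {u0 : ℝ} {u : ι → ℝ} {S : Finset ι} (hS : 0 < u0 + ∑ t ∈ S, u t)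
    (y : ι → ℝ) (a b : ℝ) :
    (u0 + ∑ t ∈ S, u t)⁻¹ * a - ∑ t ∈ univ \ S, u t * (u0 + ∑ s ∈ S, u s)⁻¹ * y t ≤ b ↔
      a ≤ (u0 + ∑ t ∈ S, u t) * b + ∑ t ∈ univ \ S, u t * y t := by
  have hfactor : ∑ t ∈ univ \ S, u t * (u0 + ∑ s ∈ S, u s)⁻¹ * y t =
      (u0 + ∑ t ∈ S, u t)⁻¹ * ∑ t ∈ univ \ S, u t * y t := by
    rw [mul_sum]
    exact sum_congr rfl fun t _ => by ring
  rw [hfactor, ← mul_sub, inv_mul_le_iff₀ hS, sub_le_iff_le_add]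

theorem le_mul_add_sum_mul_min_of_under {u0 : ℝ} (hu0 : 0 < u0) {u : ι → ℝ} (hu : ∀ j, 0 ≤ u j)
    {x y : ι → ℝ}
    (hunder : ∀ (j : ι) (S : Finset ι), j ∉ S →
      (u0 + ∑ t ∈ insert j S, u t)⁻¹ * x j -
          ∑ t ∈ univ \ insert j S, u t * (u0 + ∑ s ∈ insert j S, u s)⁻¹ * y t
        ≤ y j) (j : ι) :
    x j ≤ u0 * y j + ∑ t, u t * min (y j) (y t) := by
  set T := univ.filter (y j ≤ y ·)
  have hjT : j ∈ T := by simp [T]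
  have h := hunder j (T.erase j) (notMem_erase j T)
  rw [insert_erase hjT, inv_mul_sub_sum_le_iff (add_pos_of_pos_of_nonneg hu0
    (sum_nonneg fun t _ => hu t))] at h
  refine h.trans_eq ?_
  rw [← sum_filter_add_sum_filter_not univ (y j ≤ y ·), ← filter_not, add_mul, sum_mul, add_assoc]
  congr 2
  · exact sum_congr rfl fun t ht => by rw [min_eq_left (mem_filter.1 ht).2]
  · exact sum_congr rfl fun t ht => by rw [min_eq_right (not_le.1 (mem_filter.1 ht).2).le]

theorem mul_le_add_sum_sdiff {u0 : ℝ} {u x : ι → ℝ} (hu : ∀ j, 0 ≤ u j)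
    (hx : ∀ t, 0 ≤ x t ∧ x t ≤ 1) (j : ι) (S : Finset ι) :
    (u0 + ∑ t, u t * x t) * x j ≤ (u0 + ∑ t ∈ S, u t) * x j + ∑ t ∈ univ \ S, u t * x t := by
  rw [← sum_sdiff (subset_univ S)]
  have hS : ∑ t ∈ S, u t * x t ≤ ∑ t ∈ S, u t :=
    sum_le_sum fun t _ => mul_le_of_le_one_right (hu t) (hx t).2
  have hSc : 0 ≤ ∑ t ∈ univ \ S, u t * x t :=
    sum_nonneg fun t _ => mul_nonneg (hu t) (hx t).1
  nlinarith [mul_le_mul_of_nonneg_right hS (hx j).1, mul_le_of_le_one_right hSc (hx j).2]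

section QAP

variable {κ : Type*} [Fintype κ] (α0 : ℝ) (αon : κ → ℝ) (r0 : ι → ℝ) (r : κ → ι → ℝ) (u0 : ℝ)
  (u : ι → ℝ) (θ : κ → ι → ℝ) (E : Set (ι × ι))

-- The objective values of the feasible points of (QAP-IDM) and of (QAP-IDM-LP).
noncomputable def qapIdmValues : Set ℝ :=
  {v : ℝ | ∃ (x0 : ι → ℝ) (x : κ → ι → ℝ),
    (∀ j, x0 j = 0 ∨ x0 j = 1) ∧ (∀ i j, x i j = 0 ∨ x i j = 1) ∧
    (∀ i j, x i j ≤ x0 j) ∧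
    (∀ e ∈ E, x0 e.2 ≤ x0 e.1) ∧
    v = α0 * ((∑ j, r0 j * u j * x0 j) / (u0 + ∑ j, u j * x0 j)) +
        ∑ i, αon i * ∑ j, r i j * θ i j * x i j}

noncomputable def qapIdmLPValues : Set ℝ :=
  {v : ℝ | ∃ (x : ι → ℝ) (y0 : ℝ) (y : ι → ℝ),
    u0 * y0 + ∑ j, u j * y j = 1 ∧
    (∀ j, 0 ≤ y j ∧ y j ≤ y0) ∧
    (∀ e ∈ E, y e.2 ≤ y e.1) ∧
    (∀ (j : ι) (S : Finset ι), j ∉ S →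
      (u0 + ∑ t ∈ insert j S, u t)⁻¹ * x j -
          ∑ t ∈ Finset.univ \ insert j S, u t * (u0 + ∑ s ∈ insert j S, u s)⁻¹ * y t
        ≤ y j) ∧
    v = α0 * ∑ j, r0 j * u j * y j +
        ∑ i, αon i * ∑ j, r i j * θ i j * x j}

noncomputable def assortmentValue (S : Finset ι) : ℝ :=
  α0 * ((∑ j ∈ S, r0 j * u j) / (u0 + ∑ j ∈ S, u j)) + ∑ i, αon i * ∑ j ∈ S, r i j * θ i j

variable {α0 αon r0 r u0 u θ E}

theorem assortmentValue_mem_qapIdmValues {S : Finset ι} (hS : ∀ e ∈ E, e.2 ∈ S → e.1 ∈ S) :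
    assortmentValue α0 αon r0 r u0 u θ S ∈ qapIdmValues α0 αon r0 r u0 u θ E := by
  set x0 : ι → ℝ := fun j => if j ∈ S then 1 else 0
  have hsum (f : ι → ℝ) : ∑ j, f j * x0 j = ∑ j ∈ S, f j := by simp [x0, mul_ite]
  refine ⟨x0, fun _ => x0, fun j => ?_, fun _ j => ?_, fun _ _ => le_rfl, fun e he => ?_, ?_⟩
  · by_cases hj : j ∈ S <;> simp [x0, hj]
  · by_cases hj : j ∈ S <;> simp [x0, hj]
  · by_cases h2 : e.2 ∈ S
    · simp [x0, h2, hS e he h2]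
    · simp only [x0, if_neg h2]
      split <;> norm_num
  · simp only [assortmentValue, hsum]

theorem exists_mem_qapIdmLPValues_ge (hαon : ∀ i, 0 ≤ αon i) (hr : ∀ i j, 0 ≤ r i j)
    (hu0 : 0 < u0) (hu : ∀ j, 0 ≤ u j) (hθ : ∀ i j, 0 ≤ θ i j) {v : ℝ}
    (hv : v ∈ qapIdmValues α0 αon r0 r u0 u θ E) :
    ∃ w ∈ qapIdmLPValues α0 αon r0 r u0 u θ E, v ≤ w := by
  obtain ⟨x0, x, hx0, -, hxx0, hE, rfl⟩ := hv
  have hx0' : ∀ j, 0 ≤ x0 j ∧ x0 j ≤ 1 := fun j => by rcases hx0 j with h | h <;> simp [h]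
  set D := u0 + ∑ j, u j * x0 j
  have hD : 0 < D :=
    add_pos_of_pos_of_nonneg hu0 (sum_nonneg fun j _ => mul_nonneg (hu j) (hx0' j).1)
  refine ⟨_, ⟨x0, D⁻¹, fun j => x0 j / D, ?_, fun j => ?_, fun e he => ?_, fun j S _ => ?_, rfl⟩,
    ?_⟩
  · simp only [mul_div_assoc', ← sum_div, ← div_eq_mul_inv, ← add_div]
    exact div_self hD.ne'
  · exact ⟨div_nonneg (hx0' j).1 hD.le,
      (div_le_div_of_nonneg_right (hx0' j).2 hD.le).trans_eq (one_div D)⟩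
  · exact div_le_div_of_nonneg_right (hE e he) hD.le
  · rw [inv_mul_sub_sum_le_iff (add_pos_of_pos_of_nonneg hu0 (sum_nonneg fun t _ => hu t))]
    simp only [mul_div_assoc', ← sum_div, ← add_div]
    rw [le_div_iff₀ hD, mul_comm]
    exact mul_le_add_sum_sdiff hu hx0' j _
  · refine add_le_add (le_of_eq ?_) ?_
    · simp only [sum_div, mul_div_assoc]
    · gcongr with i _ j
      exacts [hαon i, mul_nonneg (hr i j) (hθ i j), hxx0 i j]

theorem exists_mem_qapIdmValues_ge (hαon : ∀ i, 0 ≤ αon i) (hr : ∀ i j, 0 ≤ r i j)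
    (hu0 : 0 < u0) (hu : ∀ j, 0 ≤ u j) (hθ : ∀ i j, 0 ≤ θ i j) {w : ℝ}
    (hw : w ∈ qapIdmLPValues α0 αon r0 r u0 u θ E) :
    ∃ v ∈ qapIdmValues α0 αon r0 r u0 u θ E, w ≤ v := by
  classical
  obtain ⟨x, y0, y, hsum, hy, hE, hunder, rfl⟩ := hw
  obtain ⟨S, hS, hmax⟩ := (univ.filter fun S : Finset ι => ∀ e ∈ E, e.2 ∈ S → e.1 ∈ S)
    |>.exists_max_image (assortmentValue α0 αon r0 r u0 u θ) ⟨∅, by simp⟩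
  refine ⟨_, assortmentValue_mem_qapIdmValues (mem_filter.1 hS).2, ?_⟩
  set c : ι → ℝ := fun j => ∑ i, αon i * (r i j * θ i j)
  have hc (j : ι) : 0 ≤ c j :=
    sum_nonneg fun i _ => mul_nonneg (hαon i) (mul_nonneg (hr i j) (hθ i j))
  have hon (T : Finset ι) (z : ι → ℝ) :
      ∑ i, αon i * ∑ j ∈ T, r i j * θ i j * z j = ∑ j ∈ T, c j * z j := by
    simp only [c, mul_sum, sum_mul]
    rw [sum_comm]
    exact sum_congr rfl fun j _ => sum_congr rfl fun i _ => by ring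
  have hvalue (T : Finset ι) : assortmentValue α0 αon r0 r u0 u θ T =
      (∑ j ∈ T, α0 * (r0 j * u j)) / (u0 + ∑ j ∈ T, u j) + ∑ j ∈ T, c j := by
    rw [assortmentValue, ← mul_sum, mul_div_assoc]
    simpa using hon T 1
  have key := lp_objective_le_of_forall_closed hu0 hu (fun j => α0 * (r0 j * u j)) c hc E
    (fun T hT => (hvalue T).symm.trans_le (hmax T (by simpa using hT))) hsum hy hE
    (le_mul_add_sum_mul_min_of_under hu0 hu hunder)
  rw [hon, mul_sum]
  simpa [mul_assoc] using key

end QAP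

theorem stmt18_general (n m : ℕ)
    (α0 : ℝ) (αon : Fin m → ℝ) (hαon : ∀ i, 0 ≤ αon i)
    (r0 : Fin n → ℝ)
    (r : Fin m → Fin n → ℝ) (hr : ∀ i j, 0 ≤ r i j)
    (u0 : ℝ) (hu0 : 0 < u0) (u : Fin n → ℝ) (hu : ∀ j, 0 ≤ u j)
    (θ : Fin m → Fin n → ℝ) (hθ : ∀ i j, 0 < θ i j)
    (E : Set (Fin n × Fin n)) :
    sSup {v : ℝ | ∃ (x0 : Fin n → ℝ) (x : Fin m → Fin n → ℝ),
        (∀ j, x0 j = 0 ∨ x0 j = 1) ∧ (∀ i j, x i j = 0 ∨ x i j = 1) ∧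
        (∀ i j, x i j ≤ x0 j) ∧
        (∀ e ∈ E, x0 e.2 ≤ x0 e.1) ∧
        v = α0 * ((∑ j, r0 j * u j * x0 j) / (u0 + ∑ j, u j * x0 j)) +
            ∑ i, αon i * ∑ j, r i j * θ i j * x i j} =
    sSup {v : ℝ | ∃ (x : Fin n → ℝ) (y0 : ℝ) (y : Fin n → ℝ),
        u0 * y0 + ∑ j, u j * y j = 1 ∧
        (∀ j, 0 ≤ y j ∧ y j ≤ y0) ∧
        (∀ e ∈ E, y e.2 ≤ y e.1) ∧
        (∀ (j : Fin n) (S : Finset (Fin n)), j ∉ S →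
          (u0 + ∑ t ∈ insert j S, u t)⁻¹ * x j -
              ∑ t ∈ Finset.univ \ insert j S, u t * (u0 + ∑ s ∈ insert j S, u s)⁻¹ * y t
            ≤ y j) ∧
        v = α0 * ∑ j, r0 j * u j * y j +
            ∑ i, αon i * ∑ j, r i j * θ i j * x j} := by
  have hθ' : ∀ i j, 0 ≤ θ i j := fun i j => (hθ i j).le
  exact csSup_eq_csSup_of_forall_exists_le
    (fun _ hv => exists_mem_qapIdmLPValues_ge hαon hr hu0 hu hθ' hv)
    (fun _ hw => exists_mem_qapIdmValues_ge hαon hr hu0 hu hθ' hw)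

/-- The optimal value of (QAP-IDM) equals the optimal value of the LP (QAP-IDM-LP)
built from the `Under` inequalities, under precedence constraints `E` on the offline
assortment, with offline MNL demand and online independent demand. -/
theorem stmt18 (n m : ℕ) (hn : 1 ≤ n)
    (α0 : ℝ) (hα0 : 0 ≤ α0) (αon : Fin m → ℝ) (hαon : ∀ i, 0 ≤ αon i)
    (r0 : Fin n → ℝ) (hr0 : ∀ j, 0 ≤ r0 j)
    (r : Fin m → Fin n → ℝ) (hr : ∀ i j, 0 ≤ r i j)
    (u0 : ℝ) (hu0 : 0 < u0) (u : Fin n → ℝ) (hu : ∀ j, 0 ≤ u j)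
    (θ : Fin m → Fin n → ℝ) (hθ : ∀ i j, 0 < θ i j)
    (E : Set (Fin n × Fin n)) :
    sSup {v : ℝ | ∃ (x0 : Fin n → ℝ) (x : Fin m → Fin n → ℝ),
        (∀ j, x0 j = 0 ∨ x0 j = 1) ∧ (∀ i j, x i j = 0 ∨ x i j = 1) ∧
        (∀ i j, x i j ≤ x0 j) ∧
        (∀ e ∈ E, x0 e.2 ≤ x0 e.1) ∧
        v = α0 * ((∑ j, r0 j * u j * x0 j) / (u0 + ∑ j, u j * x0 j)) +
            ∑ i, αon i * ∑ j, r i j * θ i j * x i j} =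
    sSup {v : ℝ | ∃ (x : Fin n → ℝ) (y0 : ℝ) (y : Fin n → ℝ),
        u0 * y0 + ∑ j, u j * y j = 1 ∧
        (∀ j, 0 ≤ y j ∧ y j ≤ y0) ∧
        (∀ e ∈ E, y e.2 ≤ y e.1) ∧
        (∀ (j : Fin n) (S : Finset (Fin n)), j ∉ S →
          (u0 + ∑ t ∈ insert j S, u t)⁻¹ * x j -
              ∑ t ∈ Finset.univ \ insert j S, u t * (u0 + ∑ s ∈ insert j S, u s)⁻¹ * y t
            ≤ y j) ∧
        v = α0 * ∑ j, r0 j * u j * y j +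
            ∑ i, αon i * ∑ j, r i j * θ i j * x j} :=
  stmt18_general n m α0 αon hαon r0 r hr u0 hu0 u hu θ hθ E
end
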